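/- arXiv:1711.09016 — 7 statements merged into one kernel-verified Lean document; each statement's English description precedes it below -/
import Mathlib

section
/- For all integers n ≥ 0 and k ≥ 0, the cardinality of RD_{n+2,k} equals (k+1)·Ã(n,k). -/
open Finset

/-- The number of descents of a permutation of `{1, …, m+1}`. -/
def des {m : ℕ} (π : Equiv.Perm (Fin (m + 1))) : ℕ :=
  (Finset.univ.filter fun i : Fin m => π i.succ < π i.castSucc).card

/-- The set `𝒬_{m+1}` of permutations of `{1, …, m+1}` whose largest entry appears
as the first descent (the identity permutation is included). -/
def Qset (m : ℕ) : Finset (Equiv.Perm (Fin (m + 1))) :=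
  Finset.univ.filter fun π =>
    ∀ i : Fin m, i.succ ≤ π⁻¹ (Fin.last m) → π i.castSucc < π i.succ

/-- `Ã(n,k)`: the number of permutations in `𝒬_{n+1}` with exactly `k` descents. -/
def Atil (n k : ℕ) : ℕ := ((Qset n).filter fun π => des π = k).card

/-- Condition (3) in the definition of `RD`: with `a = π⁻¹(1)` (here the smallest
entry is `0 : Fin (m+1)` and positions are `0`-indexed), either `a` is the first
position, or `a` is an interior position and `π(a-1) > π(a+1)`. -/
def rdCond {m : ℕ} (π : Equiv.Perm (Fin (m + 1))) : Prop :=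
  π⁻¹ 0 = 0 ∨ ∃ j : ℕ, ∃ h : j + 2 ≤ m,
    (π⁻¹ 0 : ℕ) = j + 1 ∧ π ⟨j + 2, by omega⟩ < π ⟨j, by omega⟩

open scoped Classical in
/-- `RD_{m+1,k}`: permutations `π` of `{1, …, m+1}` with `π ∈ 𝒬_{m+1}`, `des π = k`,
and, with `a = π⁻¹(1)`, either `a = 1` or `π(a-1) > π(a+1)`. -/
noncomputable def RD (m k : ℕ) : Finset (Equiv.Perm (Fin (m + 1))) :=
  (Qset m).filter fun π => des π = k ∧ rdCond π

/-!
Deleting the entry `1` from `π ∈ RD_{n+2,k}` leaves some `σ ∈ 𝒬_{n+1}` with `k` descents,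
and `π` is recovered from `σ` by inserting the new minimum either at the front or between the
two entries of one of the `k` descents of `σ`. Such an insertion keeps the number of descents
(the descent `σ(j) > σ(j+1)` becomes `σ(j) > 1`), and it keeps membership in `𝒬`, because
every descent of `σ` lies at or after the position of its maximum. So every `σ` has exactly
`k + 1` preimages.
-/

open Equiv

section Descents

variable {m : ℕ}

def descents (π : Perm (Fin (m + 1))) : Finset (Fin m) :=
  univ.filter fun i => π i.succ < π i.castSucc

lemma mem_descents {π : Perm (Fin (m + 1))} {i : Fin m} :
    i ∈ descents π ↔ π i.succ < π i.castSucc := by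
  simp [descents]

lemma des_eq_card_descents (π : Perm (Fin (m + 1))) : des π = #(descents π) := rfl

lemma mem_Qset_iff_forall_mem_descents (π : Perm (Fin (m + 1))) :
    π ∈ Qset m ↔ ∀ i ∈ descents π, π⁻¹ (Fin.last m) ≤ i.castSucc := by
  simp only [Qset, mem_filter, mem_univ, true_and, mem_descents, Fin.le_castSucc_iff]
  refine forall_congr' fun i => ?_
  have hne : π i.castSucc ≠ π i.succ := π.injective.ne Fin.castSucc_lt_succ.ne
  rw [← not_imp_not, not_lt, not_le, hne.symm.le_iff_lt]

end Descents

section InsertZero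

variable {n : ℕ}

def insertZero (a : Fin (n + 2)) (σ : Perm (Fin (n + 1))) : Perm (Fin (n + 2)) :=
  (finSuccEquiv' a).trans ((optionCongr σ).trans (finSuccEquiv' 0).symm)

@[simp]
lemma insertZero_apply_self (a : Fin (n + 2)) (σ : Perm (Fin (n + 1))) :
    insertZero a σ a = 0 := by
  simp [insertZero]

@[simp]
lemma insertZero_apply_succAbove (a : Fin (n + 2)) (σ : Perm (Fin (n + 1))) (i : Fin (n + 1)) :
    insertZero a σ (a.succAbove i) = (σ i).succ := by
  simp [insertZero]

lemma insertZero_inv_zero (a : Fin (n + 2)) (σ : Perm (Fin (n + 1))) :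
    (insertZero a σ)⁻¹ 0 = a := by
  rw [Perm.inv_eq_iff_eq, insertZero_apply_self]

lemma insertZero_inv_last (a : Fin (n + 2)) (σ : Perm (Fin (n + 1))) :
    (insertZero a σ)⁻¹ (Fin.last (n + 1)) = a.succAbove (σ⁻¹ (Fin.last n)) := by
  rw [Perm.inv_eq_iff_eq, insertZero_apply_succAbove, Perm.inv_def, apply_symm_apply, Fin.succ_last]

lemma insertZero_injective2 : Function.Injective2 (insertZero (n := n)) := by
  intro a b σ τ h
  obtain rfl : a = b := by rw [← insertZero_inv_zero a σ, h, insertZero_inv_zero]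
  refine ⟨rfl, Equiv.ext fun i => Fin.succ_injective _ ?_⟩
  rw [← insertZero_apply_succAbove a, ← insertZero_apply_succAbove a, h]

lemma exists_insertZero_eq (π : Perm (Fin (n + 2))) : ∃ σ, insertZero (π⁻¹ 0) σ = π := by
  set e := (finSuccEquiv' (π⁻¹ 0)).symm.trans (π.trans (finSuccEquiv' 0))
  refine ⟨removeNone e, ?_⟩
  ext1 x
  simp [insertZero, e]

end InsertZero

section InsertionSlots

variable {n : ℕ}

lemma Fin.succ_succAbove_of_succ_ne {p : Fin (n + 1)} {j : Fin n} (h : j.succ ≠ p) :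
    (p.succAbove j).succ = p.castSucc.succAbove j.succ := by
  rcases lt_or_ge j.castSucc p with hj | hj
  · have hjp : j.succ < p := lt_of_le_of_ne (Fin.castSucc_lt_iff_succ_le.mp hj) h
    rw [Fin.succAbove_of_castSucc_lt _ _ hj, Fin.succAbove_castSucc_of_lt _ _ hjp,
      Fin.succ_castSucc]
  · rw [Fin.succAbove_of_le_castSucc _ _ hj, Fin.succAbove_castSucc_of_le _ _
      (hj.trans Fin.castSucc_lt_succ.le)]

lemma succAbove_mem_descents_insertZero_iff (p : Fin (n + 1)) (σ : Perm (Fin (n + 1)))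
    (j : Fin n) :
    p.succAbove j ∈ descents (insertZero p.castSucc σ) ↔ j ∈ descents σ ∨ j.succ = p := by
  by_cases h : j.succ = p
  · subst h
    simp only [Fin.succAbove_succ_self, mem_descents, Fin.succ_castSucc, insertZero_apply_self,
      or_true, iff_true]
    rw [← Fin.succAbove_castSucc_of_lt j.succ j.castSucc Fin.castSucc_lt_succ,
      insertZero_apply_succAbove]
    exact Fin.succ_pos _
  · rw [mem_descents, mem_descents, Fin.succ_succAbove_of_succ_ne h,
      ← Fin.castSucc_succAbove_castSucc, insertZero_apply_succAbove, insertZero_apply_succAbove,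
      Fin.succ_lt_succ_iff, or_iff_left h]

lemma notMem_descents_insertZero (p : Fin (n + 1)) (σ : Perm (Fin (n + 1))) :
    p ∉ descents (insertZero p.castSucc σ) := by
  simp [mem_descents]

/-- A slot `p` stands for inserting at position `p.castSucc`: the front, or between the two
entries of a descent. -/
def insertionSlots (σ : Perm (Fin (n + 1))) : Finset (Fin (n + 1)) :=
  insert 0 ((descents σ).map (Fin.succEmb n))

lemma mem_insertionSlots {σ : Perm (Fin (n + 1))} {p : Fin (n + 1)} :
    p ∈ insertionSlots σ ↔ p = 0 ∨ ∃ j ∈ descents σ, j.succ = p := by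
  simp [insertionSlots]

lemma card_insertionSlots (σ : Perm (Fin (n + 1))) : #(insertionSlots σ) = des σ + 1 := by
  rw [insertionSlots, card_insert_of_notMem (by simp [Fin.succ_ne_zero]), card_map,
    des_eq_card_descents]

lemma descents_insertZero {p : Fin (n + 1)} {σ : Perm (Fin (n + 1))}
    (hp : p ∈ insertionSlots σ) :
    descents (insertZero p.castSucc σ) = (descents σ).map p.succAboveEmb := by
  ext i
  obtain rfl | ⟨j, rfl⟩ := p.eq_self_or_eq_succAbove i
  · simp [notMem_descents_insertZero, Fin.succAbove_ne]
  · rw [succAbove_mem_descents_insertZero_iff, ← Fin.coe_succAboveEmb, mem_map',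
      or_iff_left_iff_imp]
    rintro rfl
    obtain h0 | ⟨j', hj', hj⟩ := mem_insertionSlots.mp hp
    · exact absurd h0 (Fin.succ_ne_zero j)
    · rwa [← Fin.succ_injective _ hj]

lemma des_insertZero {p : Fin (n + 1)} {σ : Perm (Fin (n + 1))} (hp : p ∈ insertionSlots σ) :
    des (insertZero p.castSucc σ) = des σ := by
  rw [des_eq_card_descents, des_eq_card_descents, descents_insertZero hp, card_map]

lemma insertZero_mem_Qset_iff {p : Fin (n + 1)} {σ : Perm (Fin (n + 1))}
    (hp : p ∈ insertionSlots σ) :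
    insertZero p.castSucc σ ∈ Qset (n + 1) ↔ σ ∈ Qset n := by
  simp only [mem_Qset_iff_forall_mem_descents, descents_insertZero hp, forall_mem_map,
    Fin.coe_succAboveEmb, insertZero_inv_last, ← Fin.castSucc_succAbove_castSucc,
    Fin.succAbove_le_succAbove_iff]

end InsertionSlots

section RDCondition

variable {n : ℕ}

lemma rdCond_iff (π : Perm (Fin (n + 2))) :
    rdCond π ↔ π⁻¹ 0 = 0 ∨
      ∃ j : Fin n, π⁻¹ 0 = j.succ.castSucc ∧ π j.succ.succ < π j.castSucc.castSucc := by
  refine or_congr_right ⟨?_, ?_⟩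
  · rintro ⟨j, hj, hpos, hlt⟩
    exact ⟨⟨j, by omega⟩, Fin.ext (by simpa using hpos), hlt⟩
  · rintro ⟨j, hpos, hlt⟩
    exact ⟨j, by omega, by simp [hpos], hlt⟩

lemma inv_zero_ne_last_of_rdCond {π : Perm (Fin (n + 2))} (h : rdCond π) :
    π⁻¹ 0 ≠ Fin.last (n + 1) := by
  obtain h0 | ⟨j, hj, -⟩ := (rdCond_iff π).mp h
  · rw [h0]
    exact (Fin.last_pos).ne
  · rw [hj]
    exact Fin.castSucc_ne_last _

lemma rdCond_insertZero_iff (p : Fin (n + 1)) (σ : Perm (Fin (n + 1))) :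
    rdCond (insertZero p.castSucc σ) ↔ p ∈ insertionSlots σ := by
  rw [rdCond_iff, insertZero_inv_zero, mem_insertionSlots, Fin.castSucc_eq_zero_iff]
  refine or_congr_right (exists_congr fun j => ?_)
  rw [Fin.castSucc_inj, mem_descents, and_comm (a := σ _ < _), eq_comm (a := j.succ)]
  refine and_congr_right fun hp => ?_
  subst hp
  rw [← Fin.succAbove_castSucc_self j.succ, ← Fin.succAbove_castSucc_of_lt j.succ j.castSucc
    Fin.castSucc_lt_succ, insertZero_apply_succAbove, insertZero_apply_succAbove,
    Fin.succ_lt_succ_iff]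

lemma insertZero_mem_RD_iff {p : Fin (n + 1)} {σ : Perm (Fin (n + 1))} {k : ℕ} :
    insertZero p.castSucc σ ∈ RD (n + 1) k ↔
      (σ ∈ Qset n ∧ des σ = k) ∧ p ∈ insertionSlots σ := by
  simp only [RD, mem_filter, rdCond_insertZero_iff]
  by_cases hp : p ∈ insertionSlots σ
  · rw [insertZero_mem_Qset_iff hp, des_insertZero hp]
    tauto
  · tauto

lemma exists_insertZero_castSucc_eq_of_rdCond {π : Perm (Fin (n + 2))} (h : rdCond π) :
    ∃ p σ, insertZero (Fin.castSucc p) σ = π := by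
  obtain ⟨σ, hσ⟩ := exists_insertZero_eq π
  exact ⟨_, σ, by rwa [Fin.castSucc_castPred _ (inv_zero_ne_last_of_rdCond h)]⟩

end RDCondition

theorem card_RD (n k : ℕ) : (RD (n + 1) k).card = (k + 1) * Atil n k := by
  classical
  set A := (Qset n).filter fun σ => des σ = k
  have hbij : #(A.sigma insertionSlots) = #(RD (n + 1) k) := by
    refine card_bij (fun x _ => insertZero x.2.castSucc x.1) ?_ ?_ ?_
    · rintro ⟨σ, p⟩ hx
      simpa [A, insertZero_mem_RD_iff] using hx
    · rintro ⟨σ, p⟩ - ⟨τ, q⟩ - h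
      obtain ⟨hpq, rfl⟩ := insertZero_injective2 h
      obtain rfl := Fin.castSucc_inj.mp hpq
      rfl
    · intro π hπ
      obtain ⟨p, σ, rfl⟩ := exists_insertZero_castSucc_eq_of_rdCond (mem_filter.mp hπ).2.2
      exact ⟨⟨σ, p⟩, by simpa [A, insertZero_mem_RD_iff] using hπ, rfl⟩
  calc #(RD (n + 1) k) = ∑ σ ∈ A, #(insertionSlots σ) := by rw [← hbij, card_sigma]
    _ = ∑ σ ∈ A, (k + 1) := sum_congr rfl fun σ hσ => by
        rw [card_insertionSlots, (mem_filter.mp hσ).2]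
    _ = (k + 1) * Atil n k := by rw [sum_const, smul_eq_mul, mul_comm, Atil]
end

section
/- For all integers n ≥ 1 and k ≥ 1, the cardinality of R̄HD_{n+1,k−1} equals n·Ã(n−1,k−1). -/
open Finset

/-- `R̄HD_{n+1,k}` (here as `RHDbar n k`): pairs `(π, i)` with `π ∈ 𝒬_{n+1}`,
`des π = k`, and `i ∈ {1, …, π⁻¹(n+1) - 1}`, where `π⁻¹(n+1)` is the (`1`-indexed)
position of the largest entry, so `π⁻¹(n+1) - 1 = (π⁻¹ (Fin.last n) : ℕ)`. -/
def RHDbar (n k : ℕ) : Finset (Equiv.Perm (Fin (n + 1)) × ℕ) :=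
  (Qset n ×ˢ Finset.range (n + 2)).filter fun p =>
    des p.1 = k ∧ p.2 ∈ Finset.Icc 1 ((p.1⁻¹ (Fin.last n) : ℕ))

/-!
Deleting from `π ∈ 𝒬_{n+1}` the entry at a position before that of `n+1`, and standardising,
gives `σ ∈ 𝒬_n` with the same descents, because the deleted entry lies inside the increasing run
ending at `n+1`. Conversely the deleted value `s ≤ n` and `σ` determine `π` and the position:
`s` can only be put back into the increasing prefix of `σ` at the one place keeping it increasing.
Hence `(π, i) ↦ (π(i), σ)` is a bijection from `R̄HD_{n+1,k-1}` onto `{1, …, n} × QD_{n,k-1}`.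
-/

lemma eq_of_forall_le_lt_iff {α : Type*} [LinearOrder α] {t t' q : α} {p : α → Prop}
    (ht : t ≤ q) (ht' : t' ≤ q) (h : ∀ a ≤ q, (a < t ↔ p a)) (h' : ∀ a ≤ q, (a < t' ↔ p a)) :
    t = t' :=
  eq_of_forall_lt_iff fun a => ⟨fun ha => (h' a (ha.le.trans ht)).2 ((h a (ha.le.trans ht)).1 ha),
    fun ha => (h a (ha.le.trans ht')).2 ((h' a (ha.le.trans ht')).1 ha)⟩

lemma exists_forall_lt_iff_of_monotoneOn {n : ℕ} {β : Type*} [LinearOrder β] {f : Fin n → β}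
    {q : Fin n} {s : β} (hf : MonotoneOn f (Set.Iic q)) (hs : s ≤ f q) :
    ∃ t ≤ q, ∀ a ≤ q, (a < t ↔ f a < s) := by
  classical
  let S := univ.filter fun a => a ≤ q ∧ s ≤ f a
  have hSq : q ∈ S := by simp [S, hs]
  refine ⟨S.min' ⟨q, hSq⟩, S.min'_le q hSq, fun a ha => ⟨fun hat => ?_, fun has => ?_⟩⟩
  · by_contra! hsa
    exact (S.min'_le a (by simp [S, ha, hsa])).not_gt hat
  · by_contra! hta
    have hmin := (mem_filter.1 (S.min'_mem ⟨q, hSq⟩)).2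
    exact has.not_ge (hmin.2.trans (hf hmin.1 ha hta))

lemma Fin.succ_succAbove_eq_castSucc_succAbove_succ {m : ℕ} {t : Fin (m + 1)} {a : Fin m}
    (hat : a.succ ≠ t) : (t.succAbove a).succ = t.castSucc.succAbove a.succ := by
  rcases lt_or_ge a.castSucc t with h | h
  · have h' : a.succ < t := lt_of_le_of_ne (Fin.castSucc_lt_iff_succ_le.1 h) hat
    rw [Fin.succAbove_of_castSucc_lt _ _ h, Fin.succAbove_castSucc_of_lt _ _ h',
      Fin.succ_castSucc]
  · rw [Fin.succAbove_of_le_castSucc _ _ h,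
      Fin.succAbove_castSucc_of_le _ _ (h.trans Fin.castSucc_lt_succ.le)]

lemma mem_Qset_iff {m : ℕ} {π : Equiv.Perm (Fin (m + 1))} :
    π ∈ Qset m ↔ StrictMonoOn π (Set.Iic (π⁻¹ (Fin.last m))) := by
  simp only [Qset, mem_filter, mem_univ, true_and]
  constructor
  · intro h
    refine strictMonoOn_Iic_of_lt_succ fun x hx => ?_
    obtain ⟨i, rfl⟩ := Fin.eq_castSucc_of_ne_last (Fin.ne_last_of_lt hx)
    rw [Fin.orderSucc_castSucc]
    exact h i (Fin.castSucc_lt_iff_succ_le.1 hx)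
  · intro h i hi
    exact h (Set.mem_Iic.2 (Fin.castSucc_lt_succ.le.trans hi)) (Set.mem_Iic.2 hi)
      Fin.castSucc_lt_succ

namespace Equiv.Perm

variable {m : ℕ}

/-- The permutation sending `t ↦ s` whose pattern on the remaining positions is `σ`. -/
def insertAt (t s : Fin (m + 2)) (σ : Perm (Fin (m + 1))) : Perm (Fin (m + 2)) :=
  ((finSuccEquiv' t).trans σ.optionCongr).trans (finSuccEquiv' s).symm

def eraseAt (t : Fin (m + 2)) (π : Perm (Fin (m + 2))) : Perm (Fin (m + 1)) :=
  removeNone (((finSuccEquiv' t).symm.trans π).trans (finSuccEquiv' (π t)))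

@[simp]
lemma insertAt_apply_self (t s : Fin (m + 2)) (σ : Perm (Fin (m + 1))) :
    insertAt t s σ t = s := by
  simp [insertAt]

@[simp]
lemma insertAt_apply_succAbove (t s : Fin (m + 2)) (σ : Perm (Fin (m + 1))) (a : Fin (m + 1)) :
    insertAt t s σ (t.succAbove a) = s.succAbove (σ a) := by
  simp [insertAt]

@[simp]
lemma eraseAt_insertAt (t s : Fin (m + 2)) (σ : Perm (Fin (m + 1))) :
    eraseAt t (insertAt t s σ) = σ := by
  simp only [eraseAt, insertAt_apply_self]
  convert removeNone_optionCongr σ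
  ext x : 1
  simp [insertAt]

lemma insertAt_eraseAt (t : Fin (m + 2)) (π : Perm (Fin (m + 2))) :
    insertAt t (π t) (eraseAt t π) = π := by
  ext x : 1
  have hnone : (((finSuccEquiv' t).symm.trans π).trans (finSuccEquiv' (π t))) none = none := by
    simp
  simp [insertAt, eraseAt, Perm.mul_apply, hnone]

lemma insertAt_inv_last (t : Fin (m + 2)) (s : Fin (m + 1)) (σ : Perm (Fin (m + 1))) :
    (insertAt t s.castSucc σ)⁻¹ (Fin.last (m + 1)) = t.succAbove (σ⁻¹ (Fin.last m)) := by
  rw [inv_eq_iff_eq, insertAt_apply_succAbove, coe_inv, apply_symm_apply, eq_comm,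
    Fin.succAbove_eq_last_iff (Fin.castSucc_ne_last s)]

lemma insertAt_lt_insertAt_iff (t s : Fin (m + 2)) (σ : Perm (Fin (m + 1))) (a b : Fin (m + 1)) :
    insertAt t s σ (t.succAbove a) < insertAt t s σ (t.succAbove b) ↔ σ a < σ b := by
  simp [Fin.succAbove_lt_succAbove_iff]

lemma strictMonoOn_insertAt_iff {t s q : Fin (m + 1)} {σ : Perm (Fin (m + 1))} (htq : t ≤ q) :
    StrictMonoOn (insertAt t.castSucc s.castSucc σ) (Set.Iic q.succ) ↔
      StrictMonoOn σ (Set.Iic q) ∧ ∀ a ≤ q, (a < t ↔ σ a < s) := by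
  set π := insertAt t.castSucc s.castSucc σ
  have hpos : ∀ a, t.castSucc.succAbove a < t.castSucc ↔ a < t := fun a => by
    rw [Fin.succAbove_lt_iff_castSucc_lt, Fin.castSucc_lt_castSucc_iff]
  have hpos' : ∀ a, t.castSucc < t.castSucc.succAbove a ↔ t ≤ a := fun a => by
    rw [Fin.lt_succAbove_iff_le_castSucc, Fin.castSucc_le_castSucc_iff]
  have hval : ∀ a, π (t.castSucc.succAbove a) < π t.castSucc ↔ σ a < s := fun a => by
    simp [π, Fin.succAbove_lt_iff_castSucc_lt]
  have hval' : ∀ a, π t.castSucc < π (t.castSucc.succAbove a) ↔ s ≤ σ a := fun a => by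
    simp [π, Fin.lt_succAbove_iff_le_castSucc]
  have hmem : ∀ a, t.castSucc.succAbove a ∈ Set.Iic q.succ ↔ a ∈ Set.Iic q := fun a => by
    rcases lt_or_ge a t with hat | hat
    · rw [Fin.succAbove_castSucc_of_lt _ _ hat]
      exact iff_of_true (Fin.castSucc_lt_succ_iff.2 (hat.le.trans htq)).le (hat.le.trans htq)
    · rw [Fin.succAbove_castSucc_of_le _ _ hat, Set.mem_Iic, Set.mem_Iic, Fin.succ_le_succ_iff]
  have hT : t.castSucc ∈ Set.Iic q.succ := (Fin.castSucc_lt_succ_iff.2 htq).le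
  constructor
  · intro h
    refine ⟨fun a ha b hb hab => ?_, fun a ha => ?_⟩
    · rw [← insertAt_lt_insertAt_iff t.castSucc]
      exact h ((hmem a).2 ha) ((hmem b).2 hb) (Fin.strictMono_succAbove _ hab)
    · rw [← hpos, ← h.lt_iff_lt ((hmem a).2 ha) hT, hval]
  · rintro ⟨hσ, hts⟩ x hx y hy hxy
    obtain rfl | ⟨a, rfl⟩ : x = t.castSucc ∨ ∃ a, t.castSucc.succAbove a = x :=
      (eq_or_ne x _).imp_right Fin.exists_succAbove_eq
    all_goals obtain rfl | ⟨b, rfl⟩ : y = t.castSucc ∨ ∃ b, t.castSucc.succAbove b = y :=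
      (eq_or_ne y _).imp_right Fin.exists_succAbove_eq
    · exact absurd hxy (lt_irrefl _)
    · rw [hval']
      rw [hpos'] at hxy
      exact not_lt.1 fun hbs => hxy.not_gt ((hts b ((hmem b).1 hy)).2 hbs)
    · exact (hval a).2 ((hts a ((hmem a).1 hx)).1 ((hpos a).1 hxy))
    · rw [insertAt_lt_insertAt_iff]
      exact hσ ((hmem a).1 hx) ((hmem b).1 hy) (Fin.succAbove_lt_succAbove_iff.1 hxy)

lemma des_insertAt {t : Fin (m + 1)} {s : Fin (m + 2)} {σ : Perm (Fin (m + 1))}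
    (h : StrictMonoOn (insertAt t.castSucc s σ) (Set.Iic t.succ)) :
    des (insertAt t.castSucc s σ) = des σ := by
  set π := insertAt t.castSucc s σ
  have hasc : π t.castSucc < π t.succ :=
    h (Set.mem_Iic.2 Fin.castSucc_lt_succ.le) (Set.mem_Iic.2 le_rfl) Fin.castSucc_lt_succ
  have hpair : ∀ a : Fin m,
      σ a.succ < σ a.castSucc ↔ π (t.succAbove a).succ < π (t.succAbove a).castSucc := by
    intro a
    by_cases hat : a.succ = t
    · -- both pairs straddle the inserted entry, which lies in an increasing run
      subst hat
      have hlt : π a.castSucc.castSucc < π a.succ.castSucc :=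
        h (Set.mem_Iic.2 (by simp [Fin.le_def]; omega)) (Set.mem_Iic.2 (by simp [Fin.le_def]))
          Fin.castSucc_lt_succ
      rw [Fin.succAbove_succ_self, Fin.succ_castSucc,
        ← insertAt_lt_insertAt_iff a.succ.castSucc s,
        Fin.succAbove_castSucc_of_le _ _ le_rfl, Fin.castSucc_succAbove_castSucc,
        Fin.succAbove_succ_self]
      exact iff_of_false (lt_asymm (hlt.trans hasc)) (lt_asymm hlt)
    · rw [Fin.succ_succAbove_eq_castSucc_succAbove_succ hat, ← Fin.castSucc_succAbove_castSucc,
        insertAt_lt_insertAt_iff]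
  unfold des
  symm
  refine card_nbij t.succAbove (fun a ha => ?_) Fin.succAbove_right_injective.injOn
    (fun b hb => ?_)
  · simp only [coe_filter, mem_univ, true_and, Set.mem_ofPred_eq] at ha ⊢
    exact (hpair a).1 ha
  · simp only [coe_filter, mem_univ, true_and, Set.mem_ofPred_eq] at hb
    have hbt : b ≠ t := by
      rintro rfl
      exact lt_asymm hb hasc
    obtain ⟨a, rfl⟩ := Fin.exists_succAbove_eq hbt
    exact ⟨a, by simpa using (hpair a).2 hb, rfl⟩

lemma exists_eq_insertAt_of_lt_inv_last {π : Perm (Fin (m + 2))} {t : Fin (m + 2)}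
    (ht : t < π⁻¹ (Fin.last (m + 1))) :
    ∃ (t' s : Fin (m + 1)) (σ : Perm (Fin (m + 1))),
      t = t'.castSucc ∧ π = insertAt t'.castSucc s.castSucc σ := by
  have hπt : π t ≠ Fin.last (m + 1) := fun h => ht.ne (by rw [← h]; simp)
  refine ⟨t.castPred (Fin.ne_last_of_lt ht), (π t).castPred hπt, eraseAt t π,
    (Fin.castSucc_castPred _ _).symm, ?_⟩
  rw [Fin.castSucc_castPred, Fin.castSucc_castPred, insertAt_eraseAt]

lemma insertAt_mem_Qset_iff {t s : Fin (m + 1)} {σ : Perm (Fin (m + 1))} :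
    insertAt t.castSucc s.castSucc σ ∈ Qset (m + 1) ∧
        t.castSucc < (insertAt t.castSucc s.castSucc σ)⁻¹ (Fin.last (m + 1)) ↔
      σ ∈ Qset m ∧ t ≤ σ⁻¹ (Fin.last m) ∧ ∀ a ≤ σ⁻¹ (Fin.last m), (a < t ↔ σ a < s) := by
  rw [mem_Qset_iff, mem_Qset_iff, insertAt_inv_last, Fin.lt_succAbove_iff_le_castSucc,
    Fin.castSucc_le_castSucc_iff]
  constructor
  · rintro ⟨h, htq⟩
    rw [Fin.succAbove_castSucc_of_le _ _ htq, strictMonoOn_insertAt_iff htq] at h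
    exact ⟨h.1, htq, h.2⟩
  · rintro ⟨hσ, htq, hts⟩
    rw [Fin.succAbove_castSucc_of_le _ _ htq, strictMonoOn_insertAt_iff htq]
    exact ⟨⟨hσ, hts⟩, htq⟩

lemma des_insertAt_of_mem_Qset {t : Fin (m + 1)} {s : Fin (m + 2)} {σ : Perm (Fin (m + 1))}
    (hQ : insertAt t.castSucc s σ ∈ Qset (m + 1))
    (ht : t.castSucc < (insertAt t.castSucc s σ)⁻¹ (Fin.last (m + 1))) :
    des (insertAt t.castSucc s σ) = des σ :=
  des_insertAt <| (mem_Qset_iff.1 hQ).mono <| Set.Iic_subset_Iic.2 <|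
    Fin.castSucc_lt_iff_succ_le.1 ht

end Equiv.Perm

open Equiv.Perm

/-- `R̄HD_{m+1,l}` with the marked position `i` recorded as `t = i - 1 : Fin (m + 1)`. -/
def RHDbarFin (m l : ℕ) : Finset (Equiv.Perm (Fin (m + 1)) × Fin (m + 1)) :=
  {p | p.1 ∈ Qset m ∧ des p.1 = l ∧ p.2 < p.1⁻¹ (Fin.last m)}

lemma card_RHDbar_eq_card_RHDbarFin (m l : ℕ) : #(RHDbar m l) = #(RHDbarFin m l) := by
  symm
  refine card_bij (fun p _ => (p.1, (p.2 : ℕ) + 1)) ?_ ?_ ?_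
  · rintro ⟨π, t⟩ h
    simp only [RHDbarFin, mem_filter, mem_univ, true_and] at h
    simp only [RHDbar, mem_filter, mem_product, mem_range, mem_Icc]
    have := Fin.lt_def.1 h.2.2
    exact ⟨⟨h.1, by omega⟩, h.2.1, by omega, by omega⟩
  · rintro ⟨π, t⟩ - ⟨π', t'⟩ - heq
    simp only [Prod.mk.injEq, add_left_inj, Fin.val_inj] at heq
    rw [heq.1, heq.2]
  · rintro ⟨π, i⟩ h
    simp only [RHDbar, mem_filter, mem_product, mem_range, mem_Icc] at h
    obtain ⟨⟨hQ, -⟩, hdes, hi, hiP⟩ := h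
    have hP := (π⁻¹ (Fin.last m)).isLt
    refine ⟨(π, ⟨i - 1, by omega⟩), ?_, by simp only [Prod.mk.injEq, true_and]; omega⟩
    simp only [RHDbarFin, mem_filter, mem_univ, true_and]
    exact ⟨hQ, hdes, Fin.lt_def.2 (by simp only; omega)⟩

lemma card_RHDbarFin_succ (m l : ℕ) : #(RHDbarFin (m + 1) l) = (m + 1) * Atil m l := by
  have hcard : (m + 1) * Atil m l = #(range (m + 1) ×ˢ {σ ∈ Qset m | des σ = l}) := by
    rw [card_product, card_range, Atil]
  rw [hcard]
  refine card_bij (fun p _ => ((p.1 p.2 : ℕ), eraseAt p.2 p.1)) ?_ ?_ ?_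
  · rintro ⟨π, t⟩ h
    simp only [RHDbarFin, mem_filter, mem_univ, true_and] at h
    obtain ⟨hQ, hdes, ht⟩ := h
    obtain ⟨t, s, σ, rfl, rfl⟩ := exists_eq_insertAt_of_lt_inv_last ht
    obtain ⟨hσ, -, -⟩ := insertAt_mem_Qset_iff.1 ⟨hQ, ht⟩
    simp only [mem_product, mem_range, mem_filter, insertAt_apply_self, Fin.val_castSucc,
      eraseAt_insertAt]
    exact ⟨s.isLt, hσ, (des_insertAt_of_mem_Qset hQ ht).symm.trans hdes⟩
  · rintro ⟨π, t⟩ h ⟨π', t'⟩ h' heq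
    simp only [RHDbarFin, mem_filter, mem_univ, true_and] at h h'
    obtain ⟨t, s, σ, rfl, rfl⟩ := exists_eq_insertAt_of_lt_inv_last h.2.2
    obtain ⟨t', s', σ', rfl, rfl⟩ := exists_eq_insertAt_of_lt_inv_last h'.2.2
    simp only [insertAt_apply_self, Fin.val_castSucc, eraseAt_insertAt, Prod.mk.injEq] at heq
    obtain ⟨hs, rfl⟩ := heq
    obtain rfl : s = s' := Fin.ext hs
    obtain ⟨-, htq, hts⟩ := insertAt_mem_Qset_iff.1 ⟨h.1, h.2.2⟩
    obtain ⟨-, htq', hts'⟩ := insertAt_mem_Qset_iff.1 ⟨h'.1, h'.2.2⟩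
    rw [eq_of_forall_le_lt_iff htq htq' hts hts']
  · rintro ⟨j, σ⟩ h
    simp only [mem_product, mem_range, mem_filter] at h
    obtain ⟨hj, hσ, hdes⟩ := h
    obtain ⟨t, htq, hts⟩ := exists_forall_lt_iff_of_monotoneOn (s := (⟨j, hj⟩ : Fin (m + 1)))
      (mem_Qset_iff.1 hσ).monotoneOn (by simp [Fin.le_last])
    obtain ⟨hQ, ht⟩ := insertAt_mem_Qset_iff.2 ⟨hσ, htq, hts⟩
    refine ⟨(insertAt t.castSucc (⟨j, hj⟩ : Fin (m + 1)).castSucc σ, t.castSucc), ?_, by simp⟩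
    simpa [RHDbarFin] using ⟨hQ, (des_insertAt_of_mem_Qset hQ ht).trans hdes, ht⟩

theorem card_RHDbar_general (n k : ℕ) (hn : 1 ≤ n) :
    (RHDbar n (k - 1)).card = n * Atil (n - 1) (k - 1) := by
  obtain ⟨m, rfl⟩ : ∃ m, n = m + 1 := ⟨n - 1, by omega⟩
  rw [card_RHDbar_eq_card_RHDbarFin, card_RHDbarFin_succ, Nat.add_sub_cancel]

theorem card_RHDbar (n k : ℕ) (hn : 1 ≤ n) (hk : 1 ≤ k) :
    (RHDbar n (k - 1)).card = n * Atil (n - 1) (k - 1) :=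
  card_RHDbar_general n k hn
end

section
/- Let a_n = Σ_{π ∈ 𝒬_{n+1}} 2^{des(π)}. Then for every integer n ≥ 1, a_n = Σ_{j=1}^{n} C(n,j)·a_{n−j} + 2^n, where C(n,j) is the binomial coefficient. -/
/-!
Read a permutation as the list of its values. A permutation in `𝒬_{n+1}` is an increasing run
ending in `n+1`, followed by an arbitrary arrangement `w` of a set `C ⊆ {1, …, n}`; its descents are
those of `w`, plus one at `n+1` when `w` is nonempty. Since `2 ^ des w` is the number of ways to
cut `w` into decreasing blocks, the sum of `2 ^ des w` over the arrangements of an `m`-set counts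
ordered set partitions: it is the Fubini number `F m`, with `F m = ∑_{j ≥ 1} C(m, j) F (m - j)`.
Hence `a n + 1 = 2 b n` for `b n = ∑_m C(n, m) F m`, and exchanging the order of summation in
`∑_{j ≥ 1} C(n, j) b (n - j)` turns the Fubini recurrence into
`b n = 1 + ∑_{j ≥ 1} C(n, j) b (n - j)`, which is the recurrence for `a n`.
-/

open Finset

/-- `a_n = Σ_{π ∈ 𝒬_{n+1}} 2^{des π}`. -/
def aseq (n : ℕ) : ℕ := ∑ π ∈ Qset n, 2 ^ des π

namespace List

section Descents

variable {α : Type*} [LinearOrder α]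

def numDescents : List α → ℕ
  | a :: b :: l => (if b < a then 1 else 0) + numDescents (b :: l)
  | _ => 0

@[simp] theorem numDescents_nil : ([] : List α).numDescents = 0 := rfl

@[simp] theorem numDescents_singleton (a : α) : [a].numDescents = 0 := rfl

theorem numDescents_cons_cons (a b : α) (l : List α) :
    (a :: b :: l).numDescents = (if b < a then 1 else 0) + (b :: l).numDescents := rfl

theorem numDescents_ofFn {m : ℕ} (f : Fin (m + 1) → α) :
    (ofFn f).numDescents = #{i : Fin m | f i.succ < f i.castSucc} := by
  induction m with
  | zero => simp
  | succ m ih =>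
    rw [ofFn_succ, ofFn_succ, numDescents_cons_cons, ← ofFn_succ (f := fun i => f i.succ), ih,
      Fin.card_filter_univ_succ]
    simp only [Fin.succ_castSucc, Fin.castSucc_zero, Fin.succ_zero_eq_one]
    by_cases h : f 1 < f 0 <;> simp [h, add_comm]

theorem numDescents_cons_of_forall_lt {a : α} {l : List α} (h : ∀ x ∈ l, x < a) :
    (a :: l).numDescents = (if l = [] then 0 else 1) + l.numDescents := by
  cases l with
  | nil => rfl
  | cons b l => simp [numDescents_cons_cons, h b (mem_cons_self ..)]

theorem numDescents_eq_numDescents_drop {l : List α} {k : ℕ} (h : (l.take (k + 1)).SortedLT) :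
    l.numDescents = (l.drop k).numDescents := by
  induction k generalizing l with
  | zero => rfl
  | succ k ih =>
    match l, h with
    | [], _ => rfl
    | [a], _ => simp
    | a :: b :: l, h =>
      rw [sortedLT_iff_isChain, take_succ_cons, take_succ_cons, isChain_cons_cons,
        ← take_succ_cons, ← sortedLT_iff_isChain] at h
      rw [numDescents_cons_cons, if_neg (not_lt.2 h.1.le), zero_add, ih h.2, drop_succ_cons]

/-- `2 ^ l.numDescents` counts the cuttings of `l` into decreasing blocks; this sorts them by the
length `j + 1` of the first block. -/
theorem two_pow_numDescents_eq_sum {l : List α} (hl : l ≠ []) :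
    2 ^ l.numDescents = ∑ j ∈ Finset.range l.length,
      if (l.take (j + 1)).SortedGT then 2 ^ (l.drop (j + 1)).numDescents else 0 := by
  induction l with
  | nil => contradiction
  | cons a l ih =>
    cases l with
    | nil => simp [sortedGT_iff_pairwise]
    | cons b l =>
      rw [length_cons, Finset.sum_range_succ', numDescents_cons_cons, pow_add]
      simp_rw [take_succ_cons, drop_succ_cons, sortedGT_iff_isChain, isChain_cons_cons,
        ← take_succ_cons, ← sortedGT_iff_isChain, ite_and]
      simp only [drop_succ_cons] at ih
      have h₀ : (take (0 + 1) (a :: b :: l)).SortedGT := by simp [sortedGT_iff_pairwise]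
      rw [if_pos h₀, drop_zero]
      by_cases hab : b < a
      · simp only [hab, if_true, ← ih (cons_ne_nil _ _)]
        ring
      · simp [hab]

end Descents

theorem exists_eq_append_cons_of_nodup {α : Type*} {l : List α} {t : α} (hl : l.Nodup)
    (ht : t ∈ l) : ∃ pre post, l = pre ++ t :: post ∧ t ∉ pre ∧ t ∉ post := by
  obtain ⟨pre, post, rfl⟩ := append_of_mem ht
  have h := (nodup_cons.1 (nodup_middle.1 hl)).1
  rw [mem_append, not_or] at h
  exact ⟨pre, post, rfl, h⟩

section IdxOf

variable {α : Type*} [DecidableEq α] {t : α} {pre post : List α}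

theorem idxOf_append_cons_of_notMem (h : t ∉ pre) : (pre ++ t :: post).idxOf t = pre.length := by
  rw [idxOf_append_of_notMem h, idxOf_cons_self, add_zero]

theorem take_idxOf_succ_append_cons (h : t ∉ pre) :
    (pre ++ t :: post).take ((pre ++ t :: post).idxOf t + 1) = pre ++ [t] := by
  rw [idxOf_append_cons_of_notMem h, append_cons, take_left' (by simp)]

theorem drop_idxOf_succ_append_cons (h : t ∉ pre) :
    (pre ++ t :: post).drop ((pre ++ t :: post).idxOf t + 1) = post := by
  rw [idxOf_append_cons_of_notMem h, append_cons, drop_left' (by simp)]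

theorem idxOf_ofFn_perm {m : ℕ} (π : Equiv.Perm (Fin m)) (x : Fin m) :
    (ofFn π).idxOf x = (π⁻¹ x : ℕ) := by
  have hlt := idxOf_lt_length_iff.2 (mem_ofFn.2 (π.surjective x))
  rw [← (nodup_ofFn.2 π.injective).getElem_inj_iff (hi := hlt) (hj := by simp),
    getElem_idxOf hlt]
  simp

end IdxOf

theorem numDescents_eq_of_sortedLT_take_idxOf {α : Type*} [LinearOrder α] {l : List α} {t : α}
    (hl : l.Nodup) (ht : t ∈ l) (hmax : ∀ x ∈ l, x ≤ t)
    (h : (l.take (l.idxOf t + 1)).SortedLT) :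
    l.numDescents = (if l.drop (l.idxOf t + 1) = [] then 0 else 1) +
      (l.drop (l.idxOf t + 1)).numDescents := by
  obtain ⟨pre, post, rfl, htpre, htpost⟩ := exists_eq_append_cons_of_nodup hl ht
  rw [numDescents_eq_numDescents_drop h, drop_idxOf_succ_append_cons htpre,
    idxOf_append_cons_of_notMem htpre, drop_left' rfl,
    numDescents_cons_of_forall_lt fun x hx =>
      lt_of_le_of_ne (hmax x (by simp [hx])) (ne_of_mem_of_not_mem hx htpost)]

end List

def fubini : ℕ → ℕ
  | 0 => 1
  | n + 1 => ∑ j ∈ range (n + 1), (n + 1).choose (j + 1) * fubini (n - j)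

theorem fubini_eq_add_sum (m : ℕ) :
    fubini m = (if m = 0 then 1 else 0) +
      ∑ k ∈ range (m + 1), m.choose k * (if k = 0 then 0 else fubini (m - k)) := by
  cases m with
  | zero => simp [fubini]
  | succ m => simp [fubini, sum_range_succ']

namespace Finset

variable {α : Type*}

def arrangements (X : Finset α) : Finset (List α) := ⟨X.val.lists, Multiset.lists_nodup_finset X⟩

section Arrangements

variable {X : Finset α} {l : List α}

theorem mem_arrangements : l ∈ X.arrangements ↔ (l : Multiset α) = X.val := by
  simp [arrangements, eq_comm]

@[simp] theorem arrangements_empty : (∅ : Finset α).arrangements = {[]} := by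
  ext l; simp [mem_arrangements]

theorem length_eq_card_of_mem_arrangements (hl : l ∈ X.arrangements) : l.length = #X := by
  rw [← Multiset.coe_card, mem_arrangements.1 hl, card_val]

theorem nodup_of_mem_arrangements (hl : l ∈ X.arrangements) : l.Nodup := by
  rw [← Multiset.coe_nodup, mem_arrangements.1 hl]; exact X.nodup

theorem mem_iff_of_mem_arrangements (hl : l ∈ X.arrangements) {x : α} : x ∈ l ↔ x ∈ X := by
  rw [← Multiset.mem_coe, mem_arrangements.1 hl, mem_val]

variable [DecidableEq α]

theorem mem_arrangements_toFinset (hl : l.Nodup) : l ∈ l.toFinset.arrangements := by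
  rw [mem_arrangements, List.toFinset_val, hl.dedup]

theorem mem_arrangements_iff : l ∈ X.arrangements ↔ l.Nodup ∧ l.toFinset = X :=
  ⟨fun hl => ⟨nodup_of_mem_arrangements hl, ext fun _ => by
    rw [List.mem_toFinset, mem_iff_of_mem_arrangements hl]⟩,
    fun ⟨hnd, hX⟩ => hX ▸ mem_arrangements_toFinset hnd⟩

theorem cons_mem_arrangements_insert {t : α} (ht : t ∉ X) (hl : l ∈ X.arrangements) :
    t :: l ∈ (insert t X).arrangements := by
  rw [mem_arrangements] at *
  rw [insert_val_of_notMem ht, ← hl, Multiset.cons_coe]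

theorem append_mem_arrangements {A : Finset α} {l₁ l₂ : List α} (hA : A ⊆ X)
    (h₁ : l₁ ∈ A.arrangements) (h₂ : l₂ ∈ (X \ A).arrangements) : l₁ ++ l₂ ∈ X.arrangements := by
  rw [mem_arrangements] at *
  rw [← Multiset.coe_add, h₁, h₂, sdiff_val, add_tsub_cancel_of_le (val_le_iff.2 hA)]

theorem mem_arrangements_sdiff_of_append {l₁ l₂ : List α} (h : l₁ ++ l₂ ∈ X.arrangements) :
    l₂ ∈ (X \ l₁.toFinset).arrangements := by
  have hnd : l₁.Nodup := (nodup_of_mem_arrangements h).sublist (List.sublist_append_left _ _)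
  rw [mem_arrangements] at *
  rw [sdiff_val, ← h, List.toFinset_val, hnd.dedup, ← Multiset.coe_add, add_tsub_cancel_left]

theorem toFinset_eq_sdiff_of_append_mem_arrangements {l₁ l₂ : List α}
    (h : l₁ ++ l₂ ∈ X.arrangements) : l₁.toFinset = X \ l₂.toFinset := by
  have hnd := nodup_of_mem_arrangements h
  rw [← (mem_arrangements_iff.1 h).2, List.toFinset_append, union_sdiff_right,
    sdiff_eq_self_of_disjoint
      (List.disjoint_toFinset_iff_disjoint.2 (List.nodup_append'.1 hnd).2.2)]

end Arrangements

section LinearOrder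

variable [LinearOrder α] {M : Type*} [AddCommMonoid M]

/-- An arrangement whose first `k` entries decrease is determined by the set of these entries and
the arrangement of the remaining ones. -/
theorem sum_arrangements_filter_take_sortedGT (X : Finset α) {k : ℕ} (hk : k ≤ #X)
    (g : List α → M) :
    ∑ l ∈ X.arrangements with (l.take k).SortedGT, g (l.drop k) =
      ∑ A ∈ X.powersetCard k, ∑ l ∈ (X \ A).arrangements, g l := by
  rw [sum_sigma']
  refine sum_nbij' (fun l => ⟨(l.take k).toFinset, l.drop k⟩) (fun p => p.1.sort (· ≥ ·) ++ p.2)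
    ?_ ?_ ?_ ?_ fun _ _ => rfl
  · intro l hl
    obtain ⟨hX, -⟩ := mem_filter.1 hl
    have hnd := nodup_of_mem_arrangements hX
    refine mem_sigma.2 ⟨mem_powersetCard.2 ⟨fun x hx => ?_, ?_⟩, ?_⟩
    · exact (mem_iff_of_mem_arrangements hX).1 (List.mem_of_mem_take (List.mem_toFinset.1 hx))
    · rw [List.toFinset_card_of_nodup (hnd.sublist (List.take_sublist _ _)), List.length_take,
        length_eq_card_of_mem_arrangements hX, min_eq_left hk]
    · exact mem_arrangements_sdiff_of_append ((List.take_append_drop k l).symm ▸ hX)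
  · rintro ⟨A, l⟩ hp
    obtain ⟨hA, hl⟩ := mem_sigma.1 hp
    obtain ⟨hAX, hcard⟩ := mem_powersetCard.1 hA
    have hlen : (A.sort (· ≥ ·)).length = k := by rw [length_sort, hcard]
    refine mem_filter.2 ⟨append_mem_arrangements hAX (mem_arrangements.2 (sort_eq _ _)) hl, ?_⟩
    rw [List.take_left' hlen]
    exact sortedGT_sort A
  · intro l hl
    obtain ⟨hX, hsort⟩ := mem_filter.1 hl
    have hnd := (nodup_of_mem_arrangements hX).sublist (List.take_sublist k l)
    dsimp only
    rw [(List.toFinset_sort _ hnd).2 (hsort.pairwise.imp le_of_lt), List.take_append_drop]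
  · rintro ⟨A, l⟩ hp
    have hlen : (A.sort (· ≥ ·)).length = k := by
      rw [length_sort, (mem_powersetCard.1 (mem_sigma.1 hp).1).2]
    dsimp only
    rw [List.take_left' hlen, List.drop_left' hlen, sort_toFinset]

theorem sum_arrangements_two_pow_numDescents (X : Finset α) :
    ∑ l ∈ X.arrangements, 2 ^ l.numDescents = fubini #X := by
  induction h : #X using Nat.strong_induction_on generalizing X with
  | _ n ih =>
  rcases n with _ | n
  · simp [card_eq_zero.1 h, fubini]
  calc ∑ l ∈ X.arrangements, 2 ^ l.numDescents
      = ∑ l ∈ X.arrangements, ∑ j ∈ range (n + 1),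
          if (l.take (j + 1)).SortedGT then 2 ^ (l.drop (j + 1)).numDescents else 0 :=
        sum_congr rfl fun l hl => by
          have hlen := (length_eq_card_of_mem_arrangements hl).trans h
          rw [List.two_pow_numDescents_eq_sum (List.ne_nil_of_length_eq_add_one hlen), hlen]
    _ = ∑ j ∈ range (n + 1), ∑ l ∈ X.arrangements with (l.take (j + 1)).SortedGT,
          2 ^ (l.drop (j + 1)).numDescents := by
        rw [sum_comm]; simp_rw [sum_filter]
    _ = ∑ j ∈ range (n + 1), ∑ A ∈ X.powersetCard (j + 1), fubini (n - j) :=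
        sum_congr rfl fun j hj => by
          rw [sum_arrangements_filter_take_sortedGT X (by rw [h]; simpa using hj)
            (fun l => 2 ^ l.numDescents)]
          refine sum_congr rfl fun A hA => ih _ (by omega) _ ?_
          rw [card_sdiff_of_subset (mem_powersetCard.1 hA).1, (mem_powersetCard.1 hA).2, h]
          omega
    _ = fubini (n + 1) := by simp [fubini, h]

theorem sort_sdiff_insert_append_cons_mem_arrangements {X C : Finset α} {t : α} {l : List α}
    (ht : t ∈ X) (hC : C ⊆ X.erase t) (hl : l ∈ C.arrangements) :
    (X \ insert t C).sort (· ≤ ·) ++ t :: l ∈ X.arrangements := by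
  have hinsert : insert t C ⊆ X := insert_subset ht (hC.trans (erase_subset _ _))
  refine append_mem_arrangements sdiff_subset (mem_arrangements.2 (sort_eq _ _)) ?_
  rw [sdiff_sdiff_eq_self hinsert]
  exact cons_mem_arrangements_insert (fun h => by simpa using hC h) hl

/-- An arrangement whose entries up to the maximum `t` increase is determined by what follows `t`:
the entries before `t` are the remaining ones, in increasing order. -/
theorem sum_arrangements_filter_take_idxOf_sortedLT (X : Finset α) {t : α} (ht : t ∈ X)
    (hmax : ∀ x ∈ X, x ≤ t) (g : List α → M) :
    ∑ l ∈ X.arrangements with (l.take (l.idxOf t + 1)).SortedLT, g (l.drop (l.idxOf t + 1)) =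
      ∑ C ∈ (X.erase t).powerset, ∑ l ∈ C.arrangements, g l := by
  rw [sum_sigma']
  refine sum_nbij' (fun l => ⟨(l.drop (l.idxOf t + 1)).toFinset, l.drop (l.idxOf t + 1)⟩)
    (fun p => (X \ insert t p.1).sort (· ≤ ·) ++ t :: p.2) ?_ ?_ ?_ ?_ fun _ _ => rfl
  · intro l hl
    obtain ⟨hX, -⟩ := mem_filter.1 hl
    obtain ⟨pre, post, rfl, htpre, -⟩ :=
      List.exists_eq_append_cons_of_nodup (nodup_of_mem_arrangements hX)
        ((mem_iff_of_mem_arrangements hX).2 ht)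
    have hpost := mem_arrangements_sdiff_of_append (l₁ := pre ++ [t]) (by simpa using hX)
    rw [List.drop_idxOf_succ_append_cons htpre]
    refine mem_sigma.2 ⟨mem_powerset.2 fun x hx => ?_,
      mem_arrangements_toFinset (nodup_of_mem_arrangements hpost)⟩
    rw [List.mem_toFinset, mem_iff_of_mem_arrangements hpost] at hx
    simp only [mem_sdiff, List.toFinset_append, mem_union, List.mem_toFinset,
      List.mem_singleton, not_or] at hx
    exact mem_erase.2 ⟨hx.2.2, hx.1⟩
  · rintro ⟨C, l⟩ hp
    obtain ⟨hC, hl⟩ := mem_sigma.1 hp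
    dsimp only at hC hl ⊢
    have htpre : t ∉ (X \ insert t C).sort (· ≤ ·) := by simp
    refine mem_filter.2
      ⟨sort_sdiff_insert_append_cons_mem_arrangements ht (mem_powerset.1 hC) hl, ?_⟩
    rw [List.take_idxOf_succ_append_cons htpre, List.sortedLT_iff_pairwise, List.pairwise_append]
    refine ⟨(sortedLT_sort _).pairwise, by simp, fun a ha b hb => ?_⟩
    simp only [mem_sort, mem_sdiff, mem_insert, not_or, List.mem_singleton] at ha hb
    exact hb ▸ lt_of_le_of_ne (hmax a ha.1) ha.2.1
  · intro l hl
    obtain ⟨hX, hsort⟩ := mem_filter.1 hl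
    obtain ⟨pre, post, rfl, htpre, -⟩ :=
      List.exists_eq_append_cons_of_nodup (nodup_of_mem_arrangements hX)
        ((mem_iff_of_mem_arrangements hX).2 ht)
    rw [List.take_idxOf_succ_append_cons htpre, List.sortedLT_iff_pairwise,
      List.pairwise_append] at hsort
    have hnd := (nodup_of_mem_arrangements hX).sublist (List.sublist_append_left _ _)
    dsimp only
    rw [List.drop_idxOf_succ_append_cons htpre, ← List.toFinset_cons,
      ← toFinset_eq_sdiff_of_append_mem_arrangements hX,
      (List.toFinset_sort _ hnd).2 (hsort.1.imp le_of_lt)]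
  · rintro ⟨C, l⟩ hp
    obtain ⟨-, hl⟩ := mem_sigma.1 hp
    dsimp only at hl ⊢
    rw [List.drop_idxOf_succ_append_cons (by simp), (mem_arrangements_iff.1 hl).2]

theorem sum_arrangements_filter_take_idxOf_sortedLT_two_pow_numDescents (X : Finset α) {t : α}
    (ht : t ∈ X) (hmax : ∀ x ∈ X, x ≤ t) :
    ∑ l ∈ X.arrangements with (l.take (l.idxOf t + 1)).SortedLT, 2 ^ l.numDescents =
      ∑ m ∈ range #X, (#X - 1).choose m * (if m = 0 then 1 else 2 * fubini m) := by
  calc ∑ l ∈ X.arrangements with (l.take (l.idxOf t + 1)).SortedLT, 2 ^ l.numDescents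
      = ∑ l ∈ X.arrangements with (l.take (l.idxOf t + 1)).SortedLT,
          2 ^ ((if l.drop (l.idxOf t + 1) = [] then 0 else 1) +
            (l.drop (l.idxOf t + 1)).numDescents) := by
        refine sum_congr rfl fun l hl => ?_
        obtain ⟨hX, hsort⟩ := mem_filter.1 hl
        have hmem := fun {x} => mem_iff_of_mem_arrangements hX (x := x)
        rw [← List.numDescents_eq_of_sortedLT_take_idxOf (nodup_of_mem_arrangements hX)
          (hmem.2 ht) (fun x hx => hmax x (hmem.1 hx)) hsort]
    _ = ∑ C ∈ (X.erase t).powerset, ∑ l ∈ C.arrangements,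
          2 ^ ((if l = [] then 0 else 1) + l.numDescents) :=
        sum_arrangements_filter_take_idxOf_sortedLT X ht hmax
          (fun l => 2 ^ ((if l = [] then 0 else 1) + l.numDescents))
    _ = ∑ C ∈ (X.erase t).powerset, (if #C = 0 then 1 else 2 * fubini #C) := by
        refine sum_congr rfl fun C _ => ?_
        rcases C.eq_empty_or_nonempty with rfl | hC
        · simp
        · rw [if_neg hC.card_pos.ne', ← sum_arrangements_two_pow_numDescents, mul_sum]
          refine sum_congr rfl fun l hl => ?_
          rw [if_neg (List.ne_nil_of_length_pos ((length_eq_card_of_mem_arrangements hl).symm ▸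
            hC.card_pos)), pow_add, pow_one]
    _ = _ := by
        rw [sum_powerset_apply_card (fun m => if m = 0 then 1 else 2 * fubini m),
          card_erase_of_mem ht, Nat.sub_add_cancel (card_pos.2 ⟨t, ht⟩)]
        simp only [smul_eq_mul]

end LinearOrder

theorem sum_perm_ofFn {m : ℕ} {M : Type*} [AddCommMonoid M] (g : List (Fin m) → M) :
    ∑ π : Equiv.Perm (Fin m), g (List.ofFn π) =
      ∑ l ∈ (univ : Finset (Fin m)).arrangements, g l := by
  refine sum_nbij (fun π => List.ofFn π) (fun π _ => ?_) (fun π _ σ _ h => ?_) (fun l hl => ?_)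
    fun _ _ => rfl
  · exact mem_arrangements_iff.2 ⟨List.nodup_ofFn.2 π.injective,
      eq_univ_of_forall fun x => List.mem_toFinset.2 (List.mem_ofFn.2 (π.surjective x))⟩
  · exact Equiv.ext (congrFun (List.ofFn_injective h))
  · have hnd := nodup_of_mem_arrangements hl
    have hlen : l.length = m := by
      rw [length_eq_card_of_mem_arrangements hl, card_univ, Fintype.card_fin]
    let f : Fin m → Fin m := fun i => l[i.1]
    have hf : Function.Injective f := fun i j h => Fin.ext (hnd.getElem_inj_iff.1 h)
    exact ⟨Equiv.ofBijective f (Finite.injective_iff_bijective.1 hf), mem_coe.2 (mem_univ _),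
      List.ext_getElem (by simp [hlen]) fun i _ _ => by simp [f]⟩

theorem sum_range_succ_eq_add_sum_Icc {M : Type*} [AddCommMonoid M] (f : ℕ → M) (n : ℕ) :
    ∑ j ∈ range (n + 1), f j = f 0 + ∑ j ∈ Icc 1 n, f j := by
  rw [Nat.range_succ_eq_Icc_zero, ← insert_Icc_add_one_left_eq_Icc (Nat.zero_le n),
    sum_insert (by simp), zero_add]

end Finset

/-- Both sides count the pairs of disjoint subsets of an `n`-set, of sizes `k` and `j`, with
weight `f k j`. -/
theorem Nat.sum_choose_mul_sum_choose (n : ℕ) (f : ℕ → ℕ → ℕ) :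
    ∑ m ∈ range (n + 1), n.choose m * ∑ k ∈ range (m + 1), m.choose k * f k (m - k) =
      ∑ k ∈ range (n + 1), n.choose k * ∑ j ∈ range (n - k + 1), (n - k).choose j * f k j := by
  calc _ = ∑ m ∈ range (n + 1), ∑ k ∈ range (m + 1),
        n.choose k * ((n - k).choose (m - k) * f k (m - k)) :=
      sum_congr rfl fun m _ => by
        rw [mul_sum]
        refine sum_congr rfl fun k hk => ?_
        rw [← mul_assoc, ← mul_assoc, Nat.choose_mul (Nat.lt_succ_iff.1 (mem_range.1 hk))]
    _ = _ := sum_range_diag_flip (n + 1) fun k j => n.choose k * ((n - k).choose j * f k j)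
    _ = _ := sum_congr rfl fun k hk => by
        rw [mul_sum, Nat.sub_add_comm (Nat.lt_succ_iff.1 (mem_range.1 hk))]

def sumChooseFubini (n : ℕ) : ℕ := ∑ m ∈ range (n + 1), n.choose m * fubini m

theorem sumChooseFubini_eq (n : ℕ) :
    sumChooseFubini n = 1 + ∑ j ∈ Icc 1 n, n.choose j * sumChooseFubini (n - j) := by
  calc sumChooseFubini n
      = ∑ m ∈ range (n + 1), n.choose m * ((if m = 0 then 1 else 0) +
          ∑ k ∈ range (m + 1), m.choose k * (if k = 0 then 0 else fubini (m - k))) := by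
        simp_rw [← fubini_eq_add_sum]; rfl
    _ = 1 + ∑ k ∈ range (n + 1), n.choose k *
          ∑ j ∈ range (n - k + 1), (n - k).choose j * (if k = 0 then 0 else fubini j) := by
        rw [← Nat.sum_choose_mul_sum_choose n fun k j => if k = 0 then 0 else fubini j]
        simp [mul_add, sum_add_distrib]
    _ = 1 + ∑ j ∈ Icc 1 n, n.choose j * sumChooseFubini (n - j) := by
        rw [sum_range_succ_eq_add_sum_Icc]
        simp only [if_true, mul_zero, sum_const_zero, zero_add]
        refine congrArg _ (sum_congr rfl fun j hj => ?_)
        simp only [Nat.one_le_iff_ne_zero.1 (mem_Icc.1 hj).1, if_false, sumChooseFubini]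

theorem mem_Qset_iff_s11 {n : ℕ} (π : Equiv.Perm (Fin (n + 1))) :
    π ∈ Qset n ↔ ((List.ofFn π).take ((List.ofFn π).idxOf (Fin.last n) + 1)).SortedLT := by
  rw [List.idxOf_ofFn_perm, List.sortedLT_iff_isChain, List.isChain_iff_getElem]
  simp only [Qset, mem_filter, mem_univ, true_and, List.length_take, List.length_ofFn,
    List.getElem_take, List.getElem_ofFn]
  constructor
  · intro h i hi
    exact h ⟨i, by omega⟩ (Fin.le_def.2 (by simp only [Fin.val_succ]; omega))
  · intro h i hi
    rw [Fin.le_def, Fin.val_succ] at hi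
    exact h i (by omega)

theorem aseq_eq_sum_choose (n : ℕ) :
    aseq n = ∑ m ∈ range (n + 1), n.choose m * (if m = 0 then 1 else 2 * fubini m) := by
  have h := sum_arrangements_filter_take_idxOf_sortedLT_two_pow_numDescents
    (univ : Finset (Fin (n + 1))) (mem_univ (Fin.last n)) (fun x _ => Fin.le_last x)
  rw [card_univ, Fintype.card_fin, Nat.add_sub_cancel] at h
  rw [aseq, ← univ_inter (Qset n), ← sum_ite_mem]
  simp_rw [mem_Qset_iff_s11, des, ← List.numDescents_ofFn]
  rw [sum_perm_ofFn (fun l => if (l.take (l.idxOf (Fin.last n) + 1)).SortedLT then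
    2 ^ l.numDescents else 0), ← sum_filter, h]

theorem aseq_add_one (n : ℕ) : aseq n + 1 = 2 * sumChooseFubini n := by
  rw [aseq_eq_sum_choose, sumChooseFubini, sum_range_succ_eq_add_sum_Icc,
    sum_range_succ_eq_add_sum_Icc, mul_add, mul_sum]
  have h (j) (hj : j ∈ Icc 1 n) :
      n.choose j * (if j = 0 then 1 else 2 * fubini j) = 2 * (n.choose j * fubini j) := by
    rw [if_neg (Nat.one_le_iff_ne_zero.1 (mem_Icc.1 hj).1), mul_left_comm]
  rw [sum_congr rfl h, ← mul_sum]
  simp only [Nat.choose_zero_right, ↓reduceIte, mul_one, fubini]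
  ring

theorem aseq_recurrence_general (n : ℕ) :
    aseq n = (∑ j ∈ Finset.Icc 1 n, n.choose j * aseq (n - j)) + 2 ^ n := by
  have hchoose : 1 + ∑ j ∈ Icc 1 n, n.choose j = 2 ^ n := by
    rw [← Nat.sum_range_choose, sum_range_succ_eq_add_sum_Icc, Nat.choose_zero_right]
  have h : aseq n + 1 = 2 + ∑ j ∈ Icc 1 n, n.choose j * (aseq (n - j) + 1) := by
    rw [aseq_add_one, sumChooseFubini_eq, mul_add, mul_sum]
    simp_rw [aseq_add_one]
    ring_nf
  rw [← hchoose]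
  simp only [mul_add, mul_one, sum_add_distrib] at h
  omega

theorem aseq_recurrence (n : ℕ) (hn : 1 ≤ n) :
    aseq n = (∑ j ∈ Finset.Icc 1 n, n.choose j * aseq (n - j)) + 2 ^ n :=
  aseq_recurrence_general n
end

section
/- For every integer n ≥ 1, the joint distributions agree: Σ_{σ ∈ 𝒬_n} x^{asc(σ)} y^{bkone(σ)} q^{bk(σ)} p^{fbk(σ)} = Σ_{σ ∈ 𝒬̂_n} x^{exc(σ)} y^{fix(σ)} q^{cyc(σ)} p^{fcyc(σ)}, as an identity of polynomials in the four variables x, y, q, p. -/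
open Finset

/-- The number of ascents of a permutation of `{1, …, m+1}`. -/
def asc {m : ℕ} (π : Equiv.Perm (Fin (m + 1))) : ℕ :=
  (Finset.univ.filter fun i : Fin m => π i.castSucc < π i.succ).card

/-- Position `i` carries a right-to-left maximum of `π`. -/
def isRLMax {m : ℕ} (π : Equiv.Perm (Fin (m + 1))) (i : Fin (m + 1)) : Prop :=
  ∀ j, i < j → π j < π i

instance {m : ℕ} (π : Equiv.Perm (Fin (m + 1))) (i : Fin (m + 1)) :
    Decidable (isRLMax π i) := by unfold isRLMax; infer_instance

/-- `bk(π)`: the number of blocks of `π`, i.e. the number of right-to-left maxima. -/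
def bk {m : ℕ} (π : Equiv.Perm (Fin (m + 1))) : ℕ :=
  (Finset.univ.filter fun i => isRLMax π i).card

/-- `bkone(π)`: the number of blocks of length one, i.e. positions `i` carrying a
right-to-left maximum such that `i` is the first position or position `i - 1` also
carries a right-to-left maximum. -/
def bkone {m : ℕ} (π : Equiv.Perm (Fin (m + 1))) : ℕ :=
  (Finset.univ.filter fun i : Fin (m + 1) => isRLMax π i ∧
    ((i : ℕ) = 0 ∨ isRLMax π ⟨(i : ℕ) - 1, lt_of_le_of_lt (Nat.sub_le _ _) i.isLt⟩)).card

/-- `fbk(π)`: the length of the first block, i.e. the (`1`-indexed) position of the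
leftmost right-to-left maximum. -/
def fbk {m : ℕ} (π : Equiv.Perm (Fin (m + 1))) : ℕ :=
  (Finset.univ.filter fun j : Fin (m + 1) => ∀ i ≤ j, ¬ isRLMax π i).card + 1

/-- `𝒬̂_{m+1}`: permutations `σ` of `{1, …, m+1}` such that every element `x` other
than the largest element in the cycle of `σ` containing the largest element
satisfies `σ(x) > x`. -/
noncomputable def Qhat (m : ℕ) : Finset (Equiv.Perm (Fin (m + 1))) :=
  Finset.univ.filter fun σ =>
    ∀ x, σ.SameCycle x (Fin.last m) → x ≠ Fin.last m → x < σ x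

/-- `exc(σ)`: the number of excedances of `σ`. -/
def exc {n : ℕ} (σ : Equiv.Perm (Fin n)) : ℕ :=
  (Finset.univ.filter fun i => i < σ i).card

/-- `fixp(σ)`: the number of fixed points of `σ`. -/
def fixp {n : ℕ} (σ : Equiv.Perm (Fin n)) : ℕ :=
  (Finset.univ.filter fun i => σ i = i).card

/-- `cyc(σ)`: the number of cycles of `σ`, fixed points counted. -/
def cyc {n : ℕ} (σ : Equiv.Perm (Fin n)) : ℕ :=
  σ.cycleType.card + fixp σ

/-- `fcyc(σ)`: the number of elements of the cycle of `σ` containing the largest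
element. -/
noncomputable def fcyc {m : ℕ} (σ : Equiv.Perm (Fin (m + 1))) : ℕ :=
  (Finset.univ.filter fun x => σ.SameCycle x (Fin.last m)).card

/-!
Cut `π` after each of its right-to-left maxima into blocks `b₁ ⋯ bₖ`; each block ends with its
maximum, and turning every block into the cycle `(b₁ ⋯ bₖ)` gives a permutation `σ`. Ascents of `π`
only occur inside blocks and become the excedances of `σ`, blocks become cycles, blocks of length
one become fixed points, and the first block, which ends with `n`, becomes the cycle of `n`; that
cycle is increasing exactly when `π ∈ 𝒬_n`.

The map is injective on all of `𝔖_n`, hence bijective: reading `π` from left to right, an entry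
starting a block is the image under `σ` of the largest entry not yet read, and any other entry is
the image of its predecessor.
-/

namespace Equiv.Perm

variable {α β : Type*}

theorem SameCycle.eq_of_apply_eq {σ : Perm α} {f : α → β} (hf : ∀ x, f (σ x) = f x) {x y : α}
    (h : σ.SameCycle x y) : f x = f y := by
  obtain ⟨k, rfl⟩ := h
  induction k using Int.induction_on generalizing x with
  | zero => rfl
  | succ k ih => rw [zpow_add_one, mul_apply, ← ih, hf]
  | pred k ih => rw [zpow_sub_one, mul_apply, ← ih, ← hf (σ⁻¹ x), coe_inv, apply_symm_apply]

theorem card_cycleType_add_card_fixedPoints_eq_card [Fintype α] [DecidableEq α] {σ : Perm α}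
    {s : Finset α} (hex : ∀ x, ∃ r ∈ s, σ.SameCycle x r)
    (huniq : ∀ r ∈ s, ∀ r' ∈ s, σ.SameCycle r r' → r = r') :
    σ.cycleType.card + #{x | σ x = x} = #s := by
  have hfix : #{x | σ x = x} = #{r ∈ s | r ∉ σ.support} := by
    congr 1
    ext x
    simp only [mem_filter, mem_univ, true_and, mem_support, not_not]
    refine ⟨fun hx => ⟨?_, hx⟩, And.right⟩
    obtain ⟨r, hr, hxr⟩ := hex x
    rwa [hxr.eq_of_left hx]
  have hcyc : σ.cycleType.card = #{r ∈ s | r ∈ σ.support} := by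
    rw [cycleType_def, Multiset.card_map]
    refine (card_bij (fun r _ => σ.cycleOf r) (fun r hr => ?_) (fun r hr r' hr' h => ?_)
      fun c hc => ?_).symm
    · exact cycleOf_mem_cycleFactorsFinset_iff.2 (mem_filter.1 hr).2
    · rw [mem_filter] at hr hr'
      exact huniq r hr.1 r' hr'.1 ((sameCycle_iff_cycleOf_eq_of_mem_support hr.2 hr'.2).2 h)
    · obtain ⟨a, ha⟩ := (mem_cycleFactorsFinset_iff.1 hc).1.nonempty_support
      obtain ⟨r, hr, har⟩ := hex a
      have has : a ∈ σ.support := mem_cycleFactorsFinset_support_le hc ha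
      exact ⟨r, mem_filter.2 ⟨hr, har.mem_support_iff.1 has⟩,
        har.symm.cycleOf_eq.trans (cycle_is_cycleOf ha hc).symm⟩
  rw [hfix, hcyc, card_filter_add_card_filter_not]

end Equiv.Perm

open Equiv Perm

section Blocks

variable {m : ℕ}

/-- The blocks of `π` are the segments ending at its right-to-left maxima; the block containing
`i` ends at the position of the largest entry at or after `i`. -/
noncomputable def blockEnd (π : Perm (Fin (m + 1))) (i : Fin (m + 1)) : Fin (m + 1) :=
  π⁻¹ ((Ici i).sup π)

variable {π : Perm (Fin (m + 1))} {i j k : Fin (m + 1)}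

theorem apply_blockEnd (π : Perm (Fin (m + 1))) (i : Fin (m + 1)) :
    π (blockEnd π i) = (Ici i).sup π := by
  simp [blockEnd]

theorem apply_le_apply_blockEnd (h : i ≤ j) : π j ≤ π (blockEnd π i) :=
  apply_blockEnd π i ▸ le_sup (mem_Ici.2 h)

theorem le_blockEnd (π : Perm (Fin (m + 1))) (i : Fin (m + 1)) : i ≤ blockEnd π i := by
  obtain ⟨_, hj, hsup⟩ := exists_mem_eq_sup (Ici i) nonempty_Ici π
  simpa [blockEnd, hsup] using hj

theorem isRLMax_blockEnd (π : Perm (Fin (m + 1))) (i : Fin (m + 1)) :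
    isRLMax π (blockEnd π i) := fun _ hj =>
  (apply_le_apply_blockEnd ((le_blockEnd π i).trans hj.le)).lt_of_ne (π.injective.ne hj.ne')

theorem not_isRLMax_of_lt_blockEnd (hik : i ≤ k) (hk : k < blockEnd π i) : ¬ isRLMax π k :=
  fun h => (h _ hk).not_ge (apply_le_apply_blockEnd hik)

theorem blockEnd_le (hik : i ≤ k) (hk : isRLMax π k) : blockEnd π i ≤ k :=
  not_lt.1 fun h => not_isRLMax_of_lt_blockEnd hik h hk

theorem blockEnd_eq_self_iff : blockEnd π i = i ↔ isRLMax π i :=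
  ⟨fun h => h ▸ isRLMax_blockEnd π i, fun h => le_antisymm (blockEnd_le le_rfl h) (le_blockEnd π i)⟩

theorem blockEnd_blockEnd (π : Perm (Fin (m + 1))) (i : Fin (m + 1)) :
    blockEnd π (blockEnd π i) = blockEnd π i :=
  blockEnd_eq_self_iff.2 (isRLMax_blockEnd π i)

theorem blockEnd_eq_of_le_of_le (hij : i ≤ j) (hj : j ≤ blockEnd π i) :
    blockEnd π j = blockEnd π i :=
  π.injective <| le_antisymm (apply_le_apply_blockEnd (hij.trans (le_blockEnd π j)))
    (apply_le_apply_blockEnd hj)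

theorem blockEnd_castSucc_of_not_isRLMax {k : Fin m} (h : ¬ isRLMax π k.castSucc) :
    blockEnd π k.castSucc = blockEnd π k.succ := by
  have hlt : k.castSucc < blockEnd π k.castSucc :=
    (le_blockEnd π _).lt_of_ne fun he => h (blockEnd_eq_self_iff.1 he.symm)
  exact (blockEnd_eq_of_le_of_le k.castSucc_le_succ (Fin.castSucc_lt_iff_succ_le.1 hlt)).symm

theorem isRLMax_iff_sup_Ici_eq : isRLMax π i ↔ (Ici i).sup π = π i := by
  rw [← blockEnd_eq_self_iff, ← apply_blockEnd, π.injective.eq_iff]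

theorem sup_Ici_congr {π' : Perm (Fin (m + 1))} (h : ∀ j < i, π j = π' j) :
    (Ici i).sup π = (Ici i).sup π' := by
  have hcompl : ∀ σ : Perm (Fin (m + 1)), (Ici i).sup σ = ((Iio i).image σ)ᶜ.sup id := by
    intro σ
    rw [← Function.id_comp σ, ← sup_image]
    congr 1
    ext v
    obtain ⟨a, rfl⟩ := σ.surjective v
    simp [σ.injective.eq_iff]
  rw [hcompl, hcompl, image_congr fun j hj => h j (mem_Iio.1 hj)]

variable (π) in
def IsBlockStart (i : Fin (m + 1)) : Prop :=
  (i : ℕ) = 0 ∨ isRLMax π ⟨(i : ℕ) - 1, lt_of_le_of_lt (Nat.sub_le _ _) i.isLt⟩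

instance (π : Perm (Fin (m + 1))) (i : Fin (m + 1)) : Decidable (IsBlockStart π i) :=
  inferInstanceAs (Decidable (_ ∨ _))

theorem isBlockStart_zero : IsBlockStart π 0 := Or.inl rfl

theorem isBlockStart_succ {k : Fin m} : IsBlockStart π k.succ ↔ isRLMax π k.castSucc := by
  simp only [IsBlockStart, Fin.val_succ, Nat.add_sub_cancel, Nat.add_one_ne_zero, false_or]
  rfl

theorem isBlockStart_or_exists_eq_succ (π : Perm (Fin (m + 1))) (i : Fin (m + 1)) :
    IsBlockStart π i ∨ ∃ k : Fin m, i = k.succ ∧ ¬ isRLMax π k.castSucc := by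
  cases i using Fin.cases with
  | zero => exact Or.inl isBlockStart_zero
  | succ k => exact (em _).imp isBlockStart_succ.2 fun h => ⟨k, rfl, h⟩

theorem blockEnd_lt_of_isBlockStart (hj : IsBlockStart π j) (hij : i < j) : blockEnd π i < j := by
  cases j using Fin.cases with
  | zero => exact absurd hij (Fin.not_lt_zero i)
  | succ k =>
    exact (blockEnd_le (Fin.le_castSucc_iff.2 hij) (isBlockStart_succ.1 hj)).trans_lt
      k.castSucc_lt_succ

/-- Rotates every block of positions one step backwards. -/
noncomputable def blockPred (π : Perm (Fin (m + 1))) (i : Fin (m + 1)) : Fin (m + 1) :=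
  if IsBlockStart π i then blockEnd π i else ⟨(i : ℕ) - 1, lt_of_le_of_lt (Nat.sub_le _ _) i.isLt⟩

theorem blockPred_of_isBlockStart (h : IsBlockStart π i) : blockPred π i = blockEnd π i :=
  if_pos h

theorem blockPred_succ_of_not_isRLMax {k : Fin m} (h : ¬ isRLMax π k.castSucc) :
    blockPred π k.succ = k.castSucc := by
  rw [blockPred, if_neg (mt isBlockStart_succ.1 h)]
  ext
  simp

theorem isRLMax_blockPred_iff : isRLMax π (blockPred π i) ↔ IsBlockStart π i := by
  rcases isBlockStart_or_exists_eq_succ π i with h | ⟨k, rfl, hk⟩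
  · simp only [blockPred_of_isBlockStart h, isRLMax_blockEnd, h]
  · rw [blockPred_succ_of_not_isRLMax hk, isBlockStart_succ]

theorem blockPred_eq_self_iff : blockPred π i = i ↔ isRLMax π i ∧ IsBlockStart π i := by
  rcases isBlockStart_or_exists_eq_succ π i with h | ⟨k, rfl, hk⟩
  · rw [blockPred_of_isBlockStart h, blockEnd_eq_self_iff, and_iff_left h]
  · rw [blockPred_succ_of_not_isRLMax hk, isBlockStart_succ]
    simp [hk, Fin.ext_iff]

theorem blockPred_injective (π : Perm (Fin (m + 1))) : Function.Injective (blockPred π) := by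
  intro i j hij
  have hstart : IsBlockStart π i ↔ IsBlockStart π j := by
    rw [← isRLMax_blockPred_iff, hij, isRLMax_blockPred_iff]
  rcases isBlockStart_or_exists_eq_succ π i with hi | ⟨k, rfl, hk⟩
  · have hj := hstart.1 hi
    rw [blockPred_of_isBlockStart hi, blockPred_of_isBlockStart hj] at hij
    refine le_antisymm (not_lt.1 fun hji => ?_) (not_lt.1 fun hij' => ?_)
    · exact (blockEnd_lt_of_isBlockStart hi hji).not_ge (hij ▸ le_blockEnd π i)
    · exact (blockEnd_lt_of_isBlockStart hj hij').not_ge (hij ▸ le_blockEnd π j)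
  · obtain ⟨l, rfl, hl⟩ := (isBlockStart_or_exists_eq_succ π j).resolve_left
      (mt hstart.2 (mt isBlockStart_succ.1 hk))
    rw [blockPred_succ_of_not_isRLMax hk, blockPred_succ_of_not_isRLMax hl] at hij
    rw [Fin.castSucc_injective _ hij]

theorem blockEnd_blockPred (π : Perm (Fin (m + 1))) (i : Fin (m + 1)) :
    blockEnd π (blockPred π i) = blockEnd π i := by
  rcases isBlockStart_or_exists_eq_succ π i with h | ⟨k, rfl, hk⟩
  · rw [blockPred_of_isBlockStart h, blockEnd_blockEnd]
  · rw [blockPred_succ_of_not_isRLMax hk, blockEnd_castSucc_of_not_isRLMax hk]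

variable (π) in
noncomputable def blockPerm : Perm (Fin (m + 1)) :=
  Equiv.ofBijective (blockPred π) (Finite.injective_iff_bijective.1 (blockPred_injective π))

theorem blockPerm_apply (i : Fin (m + 1)) : blockPerm π i = blockPred π i := rfl

theorem sameCycle_blockPerm_blockEnd (π : Perm (Fin (m + 1))) (i : Fin (m + 1)) :
    (blockPerm π).SameCycle i (blockEnd π i) := by
  induction i using Fin.reverseInduction with
  | last => rw [blockEnd_eq_self_iff.2 fun j hj => absurd (Fin.le_last j) hj.not_ge]
  | cast k ih =>
    by_cases hk : isRLMax π k.castSucc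
    · rw [blockEnd_eq_self_iff.2 hk]
    · rw [blockEnd_castSucc_of_not_isRLMax hk, ← blockPred_succ_of_not_isRLMax hk,
        ← blockPerm_apply]
      exact sameCycle_apply_left.2 ih

theorem sameCycle_blockPerm_iff : (blockPerm π).SameCycle i j ↔ blockEnd π i = blockEnd π j :=
  ⟨SameCycle.eq_of_apply_eq (blockEnd_blockPred π), fun h =>
    (sameCycle_blockPerm_blockEnd π i).trans (h ▸ (sameCycle_blockPerm_blockEnd π j).symm)⟩

variable (π) in
/-- Each block `b₁ ⋯ bₖ` of `π` becomes the cycle `(b₁ ⋯ bₖ)`. -/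
noncomputable def blockCycles : Perm (Fin (m + 1)) :=
  π * (blockPerm π)⁻¹ * π⁻¹

theorem blockCycles_apply_blockPred (π : Perm (Fin (m + 1))) (i : Fin (m + 1)) :
    blockCycles π (π (blockPred π i)) = π i := by
  simp [blockCycles, ← blockPerm_apply]

theorem blockCycles_apply_castSucc {k : Fin m} (h : ¬ isRLMax π k.castSucc) :
    blockCycles π (π k.castSucc) = π k.succ := by
  rw [← blockPred_succ_of_not_isRLMax h, blockCycles_apply_blockPred]

theorem apply_eq_blockCycles_sup_Ici (h : IsBlockStart π i) :
    π i = blockCycles π ((Ici i).sup π) := by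
  rw [← apply_blockEnd, ← blockPred_of_isBlockStart h, blockCycles_apply_blockPred]

theorem sameCycle_blockCycles_iff :
    (blockCycles π).SameCycle (π i) (π j) ↔ blockEnd π i = blockEnd π j := by
  simp [blockCycles, sameCycle_conj, sameCycle_blockPerm_iff]

theorem blockEnd_eq_inv_last_iff : blockEnd π j = π⁻¹ (Fin.last m) ↔ j ≤ π⁻¹ (Fin.last m) := by
  refine ⟨fun h => h ▸ le_blockEnd π j, fun h => π.injective ?_⟩
  have hle : Fin.last m ≤ π (blockEnd π j) := by simpa using apply_le_apply_blockEnd (π := π) h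
  simpa using le_antisymm (Fin.le_last _) hle

theorem not_isRLMax_of_lt_inv_last (h : j < π⁻¹ (Fin.last m)) : ¬ isRLMax π j :=
  not_isRLMax_of_lt_blockEnd le_rfl (by rwa [blockEnd_eq_inv_last_iff.2 h.le])

theorem sameCycle_blockCycles_last_iff :
    (blockCycles π).SameCycle (π j) (Fin.last m) ↔ j ≤ π⁻¹ (Fin.last m) := by
  conv_lhs => rw [← π.apply_symm_apply (Fin.last m)]
  rw [← coe_inv, sameCycle_blockCycles_iff, blockEnd_eq_inv_last_iff.2 le_rfl,
    blockEnd_eq_inv_last_iff]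

theorem exc_blockCycles (π : Perm (Fin (m + 1))) : exc (blockCycles π) = asc π := by
  have hreindex : exc (blockCycles π) = #{i | π (blockPred π i) < π i} := by
    refine (card_equiv (π * blockPerm π) fun i => ?_).symm
    simp [blockPerm_apply, blockCycles_apply_blockPred]
  rw [hreindex, Fin.card_filter_univ_succ, if_neg, asc]
  · congr 1
    ext k
    by_cases hk : isRLMax π k.castSucc
    · simp only [mem_filter, mem_univ, true_and,
        blockPred_of_isBlockStart (isBlockStart_succ.2 hk)]
      exact iff_of_false (apply_le_apply_blockEnd le_rfl).not_gt
        (lt_asymm (hk _ k.castSucc_lt_succ))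
    · simp [blockPred_succ_of_not_isRLMax hk]
  · rw [blockPred_of_isBlockStart isBlockStart_zero]
    exact (apply_le_apply_blockEnd le_rfl).not_gt

theorem fixp_blockCycles (π : Perm (Fin (m + 1))) : fixp (blockCycles π) = bkone π := by
  refine (card_equiv (π * blockPerm π) fun i => ?_).symm
  simp only [mem_filter, mem_univ, true_and, mul_apply, blockPerm_apply,
    blockCycles_apply_blockPred, π.injective.eq_iff, eq_comm (a := i), blockPred_eq_self_iff]
  rfl

theorem cyc_blockCycles (π : Perm (Fin (m + 1))) : cyc (blockCycles π) = bk π := by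
  rw [cyc, fixp,
    card_cycleType_add_card_fixedPoints_eq_card (s := (univ.filter (isRLMax π)).image π),
    card_image_of_injective _ π.injective, bk]
  · intro x
    obtain ⟨i, rfl⟩ := π.surjective x
    exact ⟨π (blockEnd π i), mem_image_of_mem _ (by simp [isRLMax_blockEnd]),
      sameCycle_blockCycles_iff.2 (blockEnd_blockEnd π i).symm⟩
  · simp only [mem_image, mem_filter, mem_univ, true_and]
    rintro _ ⟨i, hi, rfl⟩ _ ⟨j, hj, rfl⟩ h
    rw [sameCycle_blockCycles_iff, blockEnd_eq_self_iff.2 hi, blockEnd_eq_self_iff.2 hj] at h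
    rw [h]

theorem fcyc_blockCycles (π : Perm (Fin (m + 1))) : fcyc (blockCycles π) = fbk π := by
  have hfirst : univ.filter (fun j => ∀ i ≤ j, ¬ isRLMax π i) = Iio (π⁻¹ (Fin.last m)) := by
    ext j
    simp only [mem_filter, mem_univ, true_and, mem_Iio]
    refine ⟨fun h => not_le.1 fun hj => h _ hj ?_, fun hj i hij => ?_⟩
    · exact blockEnd_eq_self_iff.1 (blockEnd_eq_inv_last_iff.2 le_rfl)
    · exact not_isRLMax_of_lt_inv_last (hij.trans_lt hj)
  rw [fcyc, fbk, hfirst, Fin.card_Iio, ← Fin.card_Iic]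
  exact (card_equiv π fun j => by simp [sameCycle_blockCycles_last_iff]).symm

theorem blockCycles_mem_Qhat_iff (π : Perm (Fin (m + 1))) :
    blockCycles π ∈ Qhat m ↔ π ∈ Qset m := by
  have hQhat : blockCycles π ∈ Qhat m ↔
      ∀ j < π⁻¹ (Fin.last m), π j < blockCycles π (π j) := by
    simp only [Qhat, mem_filter, mem_univ, true_and]
    rw [π.surjective.forall]
    refine forall_congr' fun j => ?_
    rw [sameCycle_blockCycles_last_iff, lt_iff_le_and_ne (a := j), and_imp, ne_eq j,
      eq_inv_iff_eq]
  rw [hQhat, Fin.forall_fin_succ', and_iff_left fun h => absurd h (Fin.le_last _).not_gt]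
  simp only [Qset, mem_filter, mem_univ, true_and, Fin.castSucc_lt_iff_succ_le]
  refine forall_congr' fun k => imp_congr_right fun hk => ?_
  rw [blockCycles_apply_castSucc
    (not_isRLMax_of_lt_inv_last (Fin.castSucc_lt_iff_succ_le.2 hk))]

theorem apply_eq_of_blockCycles_eq {π' : Perm (Fin (m + 1))} (h : blockCycles π = blockCycles π')
    (hlt : ∀ j < i, π j = π' j) : π i = π' i := by
  have hsup {j} (hj : j ≤ i) : (Ici j).sup π = (Ici j).sup π' :=
    sup_Ici_congr fun l hl => hlt l (hl.trans_le hj)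
  cases i using Fin.cases with
  | zero =>
    rw [apply_eq_blockCycles_sup_Ici isBlockStart_zero,
      apply_eq_blockCycles_sup_Ici (π := π') isBlockStart_zero, h, hsup le_rfl]
  | succ k =>
    have hk := hlt _ k.castSucc_lt_succ
    have hRL : isRLMax π k.castSucc ↔ isRLMax π' k.castSucc := by
      rw [isRLMax_iff_sup_Ici_eq, isRLMax_iff_sup_Ici_eq, hsup k.castSucc_le_succ, hk]
    by_cases hk' : isRLMax π k.castSucc
    · rw [apply_eq_blockCycles_sup_Ici (isBlockStart_succ.2 hk'),
        apply_eq_blockCycles_sup_Ici (isBlockStart_succ.2 (hRL.1 hk')), h, hsup le_rfl]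
    · rw [← blockCycles_apply_castSucc hk', ← blockCycles_apply_castSucc (mt hRL.2 hk'), h, hk]

theorem blockCycles_injective : Function.Injective (blockCycles (m := m)) :=
  fun _ _ h => Equiv.ext fun i =>
    WellFoundedLT.induction i fun _ ih => apply_eq_of_blockCycles_eq h ih

end Blocks

theorem joint_distribution_eq {R : Type*} [CommRing R] (x y q p : R) (m : ℕ) :
    ∑ σ ∈ Qset m, x ^ asc σ * y ^ bkone σ * q ^ bk σ * p ^ fbk σ
      = ∑ σ ∈ Qhat m, x ^ exc σ * y ^ fixp σ * q ^ cyc σ * p ^ fcyc σ := by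
  refine sum_equiv (Equiv.ofBijective _ (Finite.injective_iff_bijective.1 blockCycles_injective))
    (fun π => (blockCycles_mem_Qhat_iff π).symm) fun π _ => ?_
  rw [Equiv.ofBijective_apply, exc_blockCycles, fixp_blockCycles, cyc_blockCycles,
    fcyc_blockCycles]
end

section
/- For every integer n ≥ 0, the polynomial identity Ã_n(x,y,q,p) = y·p·q·A_n(x,y,q) + Σ_{k=1}^{n} C(n,k)·x^k·q·p^{k+1}·A_{n−k}(x,y,q) holds in the polynomial ring in the variables x, y, q, p, where C(n,k) is the binomial coefficient. -/
/-!
For `σ ∈ 𝒬̂_{n+1}` let `S` be the set of points other than `n+1` on the cycle through `n+1`.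
That cycle is forced to be the increasing cycle `(s₁ s₂ … sₖ n+1)`: going round it from the
maximum, every step goes up until the cycle returns to the maximum. So `σ` is this cycle times
an arbitrary permutation of the `n - k` remaining points, which, relabelled order-preservingly
by `1, …, n - k`, keeps its excedances and its cycles. The increasing cycle adds `k`
excedances, one cycle, a fixed point exactly when `k = 0`, and gives `fcyc σ = k + 1`; summing
over the `C(n, k)` choices of `S` with `#S = k` gives the formula.
-/

open Finset

/-- `A_n(x,y,q) = Σ_{σ ∈ S_n} x^{exc σ} y^{fix σ} q^{cyc σ}` (with `A_0 = 1`). -/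
def Apoly {R : Type*} [CommRing R] (n : ℕ) (x y q : R) : R :=
  ∑ σ : Equiv.Perm (Fin n), x ^ exc σ * y ^ fixp σ * q ^ cyc σ

open Equiv Equiv.Perm

lemma sameCycle_mul_iff_of_commute {β : Type*} {f g : Perm β} {x y : β} (h : Commute f g)
    (hy : g y = y) : (f * g).SameCycle x y ↔ f.SameCycle x y := by
  rw [sameCycle_comm, sameCycle_comm (f := f)]
  simp only [SameCycle, h.mul_zpow, Perm.mul_apply, zpow_apply_eq_self_of_apply_eq_self hy]

section IncreasingCycle

variable {α : Type*} [LinearOrder α]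

def incCycle (S : Finset α) (m : α) : Perm α :=
  (S.sort (· ≤ ·) ++ [m]).formPerm

variable {S : Finset α} {m a x : α}

@[simp]
lemma incCycle_empty (m : α) : incCycle ∅ m = 1 := by
  simp [incCycle]

lemma mem_sort_append_singleton : x ∈ S.sort (· ≤ ·) ++ [m] ↔ x ∈ insert m S := by
  simp [or_comm]

lemma nodup_sort_append_singleton (hS : ∀ s ∈ S, s < m) :
    (S.sort (· ≤ ·) ++ [m]).Nodup := by
  simpa [List.nodup_append, sort_nodup] using fun s hs => (hS s hs).ne

lemma incCycle_apply_of_notMem (hx : x ∉ insert m S) : incCycle S m x = x :=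
  List.formPerm_apply_of_notMem (mt mem_sort_append_singleton.mp hx)

lemma incCycle_apply_mem (hx : x ∈ insert m S) : incCycle S m x ∈ insert m S :=
  mem_sort_append_singleton.mp
    (List.formPerm_apply_mem_of_mem (mem_sort_append_singleton.mpr hx))

lemma incCycle_apply_le (hS : ∀ s ∈ S, s < m) (hx : x ∈ insert m S) : incCycle S m x ≤ m := by
  rcases mem_insert.mp (incCycle_apply_mem hx) with h | h
  · exact h.le
  · exact (hS _ h).le

lemma incCycle_insert (ha : ∀ s ∈ S, a < s) (ham : a < m) :
    incCycle (insert a S) m = incCycle S m * swap a m := by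
  have haS : a ∉ S := fun h => lt_irrefl a (ha a h)
  obtain ⟨b, l, hbl⟩ := List.exists_cons_of_ne_nil (List.concat_ne_nil m (S.sort (· ≤ ·)))
  have hca : incCycle S m a = a := incCycle_apply_of_notMem (by simp [haS, ham.ne])
  have hcm : incCycle S m m = b := by
    have hlast : (b :: l).getLast (List.cons_ne_nil b l) = m := by
      simp only [← hbl, List.getLast_append_singleton]
    have h := List.formPerm_apply_getLast b l
    rwa [hlast, ← hbl, ← incCycle] at h
  rw [incCycle, sort_insert _ (fun s hs => (ha s hs).le) haS, List.cons_append, hbl,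
    List.formPerm_cons_cons, ← hbl, ← incCycle, ← hcm, ← hca, swap_apply_apply, hca,
    inv_mul_cancel_right]

lemma lt_incCycle_apply (hS : ∀ s ∈ S, s < m) (hx : x ∈ S) : x < incCycle S m x := by
  induction S using induction_on_min generalizing x with
  | empty => simp at hx
  | insert a S ha ih =>
    have hS' : ∀ s ∈ S, s < m := fun s hs => hS s (mem_insert_of_mem hs)
    have ham : a < m := hS a (mem_insert_self a S)
    rw [incCycle_insert ha ham, Perm.mul_apply]
    rcases mem_insert.mp hx with rfl | hx
    · rw [swap_apply_left]
      rcases mem_insert.mp (incCycle_apply_mem (mem_insert_self m S)) with h | h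
      · rwa [h]
      · exact ha _ h
    · rw [swap_apply_of_ne_of_ne (ha x hx).ne' (hS' x hx).ne]
      exact ih hS' hx

lemma eq_incCycle (hS : ∀ s ∈ S, s < m) {σ : Perm α} (hfix : ∀ x ∉ insert m S, σ x = x)
    (hlt : ∀ x ∈ S, x < σ x) : σ = incCycle S m := by
  induction S using induction_on_min generalizing σ with
  | empty =>
    have hm : σ m = m := by
      by_contra h
      exact h (σ.injective (hfix (σ m) (by simpa using h)))
    ext x
    by_cases hx : x = m
    · simp [hx, hm]
    · simp [hfix x (by simpa using hx)]
  | insert a S ha ih =>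
    have hS' : ∀ s ∈ S, s < m := fun s hs => hS s (mem_insert_of_mem hs)
    have ham : a < m := hS a (mem_insert_self a S)
    -- the least moved point `a` can only be the image of `m`
    have hma : σ m = a := by
      set y := σ⁻¹ a
      have hy : σ y = a := σ.apply_symm_apply a
      by_contra hma
      have hym : y ≠ m := fun h => hma (h ▸ hy)
      have hyT : y ∈ insert a S := by
        by_contra hyT
        have hfy : σ y = y := hfix y (by simp_all)
        exact hyT (hfy ▸ hy ▸ mem_insert_self a S)
      have hya : y < a := hy ▸ hlt y hyT
      rcases mem_insert.mp hyT with h | h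
      · exact hya.ne h
      · exact (ha y h).not_gt hya
    rw [incCycle_insert ha ham, ← ih hS' (σ := σ * swap a m), mul_swap_mul_self]
    · intro x hx
      by_cases hxa : x = a
      · simp [hxa, hma]
      · have hxm : x ≠ m := fun h => hx (h ▸ mem_insert_self m S)
        rw [Perm.mul_apply, swap_apply_of_ne_of_ne hxa hxm]
        exact hfix x (by simp_all)
    · intro x hx
      rw [Perm.mul_apply, swap_apply_of_ne_of_ne (ha x hx).ne' (hS' x hx).ne]
      exact hlt x (mem_insert_of_mem hx)

lemma incCycle_apply_ne (hS : ∀ s ∈ S, s < m) (hne : S.Nonempty) (hx : x ∈ insert m S) :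
    incCycle S m x ≠ x :=
  (List.formPerm_apply_mem_ne_self_iff _ (nodup_sort_append_singleton hS) x
    (mem_sort_append_singleton.mpr hx)).mpr (by simpa using hne.card_pos)

lemma isCycle_incCycle (hS : ∀ s ∈ S, s < m) (hne : S.Nonempty) : (incCycle S m).IsCycle :=
  List.isCycle_formPerm (nodup_sort_append_singleton hS) (by simpa using hne.card_pos)

lemma support_incCycle [Fintype α] (hS : ∀ s ∈ S, s < m) (hne : S.Nonempty) :
    (incCycle S m).support = insert m S := by
  ext x
  rw [mem_support]
  exact ⟨not_imp_comm.mp incCycle_apply_of_notMem, incCycle_apply_ne hS hne⟩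

lemma sameCycle_incCycle_iff (hS : ∀ s ∈ S, s < m) :
    (incCycle S m).SameCycle x m ↔ x ∈ insert m S := by
  rcases S.eq_empty_or_nonempty with rfl | hne
  · simp
  have hm := incCycle_apply_ne hS hne (mem_insert_self m S)
  refine ⟨fun h => ?_, fun hx =>
    (isCycle_incCycle hS hne).sameCycle (incCycle_apply_ne hS hne hx) hm⟩
  by_contra hx
  exact hm (h.apply_eq_self_iff.mp (incCycle_apply_of_notMem hx))

lemma disjoint_incCycle {τ : Perm α} (hτ : ∀ x ∈ insert m S, τ x = x) :
    (incCycle S m).Disjoint τ := fun x =>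
  if hx : x ∈ insert m S then Or.inr (hτ x hx) else Or.inl (incCycle_apply_of_notMem hx)

lemma sameCycle_incCycle_mul_iff {τ : Perm α} (hS : ∀ s ∈ S, s < m)
    (hτ : ∀ x ∈ insert m S, τ x = x) :
    (incCycle S m * τ).SameCycle x m ↔ x ∈ insert m S := by
  rw [sameCycle_mul_iff_of_commute (disjoint_incCycle hτ).commute (hτ m (mem_insert_self m S)),
    sameCycle_incCycle_iff hS]

end IncreasingCycle

section Statistics

variable {N : ℕ}

lemma fixp_add_card_support (σ : Perm (Fin N)) : fixp σ + #σ.support = N := by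
  have h : (univ.filter fun i => σ i = i) = σ.supportᶜ := by
    ext i
    simp [mem_support]
  rw [fixp, h, card_compl_add_card, Fintype.card_fin]

lemma exc_mul_of_disjoint {σ τ : Perm (Fin N)} (h : σ.Disjoint τ) :
    exc (σ * τ) = exc σ + exc τ := by
  simp only [exc, card_filter, ← sum_add_distrib]
  refine sum_congr rfl fun i _ => ?_
  rcases h i with hσ | hτ
  · rw [h.commute.eq, Perm.mul_apply, hσ]
    simp
  · rw [Perm.mul_apply, hτ]
    simp

lemma exc_incCycle {S : Finset (Fin N)} {m : Fin N} (hS : ∀ s ∈ S, s < m) :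
    exc (incCycle S m) = #S := by
  rw [exc]
  congr 1
  ext x
  simp only [mem_filter, mem_univ, true_and]
  refine ⟨fun hx => ?_, lt_incCycle_apply hS⟩
  by_contra hxS
  by_cases hxm : x = m
  · subst hxm
    exact (incCycle_apply_le hS (mem_insert_self x S)).not_gt hx
  · rw [incCycle_apply_of_notMem (by simp [hxm, hxS])] at hx
    exact lt_irrefl x hx

end Statistics

section ExtendOn

variable {N : ℕ} (U : Finset (Fin N))

def extendOn (g : Perm (Fin #U)) : Perm (Fin N) :=
  g.extendDomain (U.orderIsoOfFin rfl).toEquiv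

variable {U}

lemma extendOn_apply_of_notMem (g : Perm (Fin #U)) {x : Fin N} (hx : x ∉ U) :
    extendOn U g x = x :=
  extendDomain_apply_not_subtype _ _ hx

lemma extendOn_compl_apply_of_mem {T : Finset (Fin N)} (g : Perm (Fin #Tᶜ)) {x : Fin N}
    (hx : x ∈ T) : extendOn Tᶜ g x = x :=
  extendOn_apply_of_notMem g (notMem_compl.mpr hx)

lemma extendOn_injective : Function.Injective (extendOn U) :=
  extendDomainHom_injective _

lemma exists_extendOn_eq {τ : Perm (Fin N)} (hτ : ∀ x ∉ U, τ x = x) :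
    ∃ g, extendOn U g = τ := by
  have hU : ∀ x, τ x ∈ U ↔ x ∈ U := fun x => by
    by_cases hx : x ∈ U
    · refine ⟨fun _ => hx, fun _ => ?_⟩
      by_contra h
      exact h (by rwa [τ.injective (hτ _ h)])
    · simp [hτ x hx, hx]
  refine ⟨(U.orderIsoOfFin rfl).toEquiv.symm.permCongr (τ.subtypePerm hU), Equiv.ext fun x => ?_⟩
  by_cases hx : x ∈ U
  · simp [extendOn, extendDomain_apply_subtype _ _ hx, permCongr_apply]
  · rw [extendOn_apply_of_notMem _ hx, hτ x hx]

lemma exc_extendOn (g : Perm (Fin #U)) : exc (extendOn U g) = exc g := by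
  set f := U.orderIsoOfFin rfl
  have happly (a : Fin #U) : extendOn U g (f a) = f (g a) :=
    extendDomain_apply_image _ _ a
  symm
  refine card_bij (fun a _ => (f a : Fin N)) (fun a ha => ?_)
    (fun a _ b _ h => f.injective (Subtype.ext h)) (fun i hi => ?_)
  · simp only [mem_filter, mem_univ, true_and] at ha ⊢
    rw [happly, Subtype.coe_lt_coe, f.lt_iff_lt]
    exact ha
  · simp only [mem_filter, mem_univ, true_and] at hi
    have hiU : i ∈ U := by
      by_contra h
      rw [extendOn_apply_of_notMem g h] at hi
      exact lt_irrefl i hi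
    refine ⟨f.symm ⟨i, hiU⟩, ?_, by simp⟩
    simp only [mem_filter, mem_univ, true_and]
    rw [← f.lt_iff_lt, ← Subtype.coe_lt_coe, ← happly, f.apply_symm_apply]
    exact hi

lemma card_support_extendOn (g : Perm (Fin #U)) :
    #(extendOn U g).support = #g.support :=
  card_support_extend_domain _

lemma cycleType_extendOn (g : Perm (Fin #U)) : (extendOn U g).cycleType = g.cycleType :=
  cycleType_extendDomain _

lemma fixp_extendOn (g : Perm (Fin #U)) : fixp (extendOn U g) + #U = fixp g + N := by
  have h₁ := fixp_add_card_support (extendOn U g)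
  have h₂ := fixp_add_card_support g
  rw [card_support_extendOn] at h₁
  omega

lemma cyc_extendOn (g : Perm (Fin #U)) : cyc (extendOn U g) + #U = cyc g + N := by
  have := fixp_extendOn g
  rw [cyc, cyc, cycleType_extendOn]
  omega

end ExtendOn

section Qhat

variable {n : ℕ}

noncomputable def cycleBelowLast (σ : Perm (Fin (n + 1))) : Finset (Fin (n + 1)) :=
  {x | σ.SameCycle x (Fin.last n) ∧ x < Fin.last n}

lemma lt_last_of_mem_cycleBelowLast {σ : Perm (Fin (n + 1))} {x : Fin (n + 1)}
    (hx : x ∈ cycleBelowLast σ) : x < Fin.last n := by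
  simp only [cycleBelowLast, mem_filter] at hx
  exact hx.2.2

lemma mem_insert_cycleBelowLast {σ : Perm (Fin (n + 1))} {x : Fin (n + 1)} :
    x ∈ insert (Fin.last n) (cycleBelowLast σ) ↔ σ.SameCycle x (Fin.last n) := by
  rcases (Fin.le_last x).eq_or_lt with h | h
  · simp [h, SameCycle.refl]
  · simp [cycleBelowLast, h, h.ne]

variable {S : Finset (Fin (n + 1))} {τ : Perm (Fin (n + 1))}

lemma incCycle_mul_mem_Qhat (hS : ∀ s ∈ S, s < Fin.last n)
    (hτ : ∀ x ∈ insert (Fin.last n) S, τ x = x) : incCycle S (Fin.last n) * τ ∈ Qhat n := by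
  simp only [Qhat, mem_filter, mem_univ, true_and]
  intro x hx hxm
  rw [sameCycle_incCycle_mul_iff hS hτ] at hx
  rw [Perm.mul_apply, hτ x hx]
  exact lt_incCycle_apply hS ((mem_insert.mp hx).resolve_left hxm)

lemma cycleBelowLast_incCycle_mul (hS : ∀ s ∈ S, s < Fin.last n)
    (hτ : ∀ x ∈ insert (Fin.last n) S, τ x = x) :
    cycleBelowLast (incCycle S (Fin.last n) * τ) = S := by
  ext x
  simp only [cycleBelowLast, mem_filter, mem_univ, true_and,
    sameCycle_incCycle_mul_iff hS hτ, mem_insert]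
  exact ⟨fun h => h.1.resolve_left h.2.ne, fun h => ⟨Or.inr h, hS x h⟩⟩

lemma fcyc_incCycle_mul (hS : ∀ s ∈ S, s < Fin.last n)
    (hτ : ∀ x ∈ insert (Fin.last n) S, τ x = x) :
    fcyc (incCycle S (Fin.last n) * τ) = #S + 1 := by
  simp only [fcyc, sameCycle_incCycle_mul_iff hS hτ, filter_mem_eq_inter,
    univ_inter]
  exact card_insert_of_notMem fun h => lt_irrefl _ (hS _ h)

lemma apply_eq_incCycle_of_mem_Qhat {σ : Perm (Fin (n + 1))} (hσ : σ ∈ Qhat n)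
    {x : Fin (n + 1)} (hx : x ∈ insert (Fin.last n) (cycleBelowLast σ)) :
    σ x = incCycle (cycleBelowLast σ) (Fin.last n) x := by
  have hcycle : σ.cycleOf (Fin.last n) = incCycle (cycleBelowLast σ) (Fin.last n) := by
    refine eq_incCycle (fun s => lt_last_of_mem_cycleBelowLast) (fun y hy => ?_) (fun y hy => ?_)
    · rw [mem_insert_cycleBelowLast, sameCycle_comm] at hy
      exact cycleOf_apply_of_not_sameCycle hy
    · have hy' := mem_insert_cycleBelowLast.mp (mem_insert_of_mem hy)
      rw [hy'.symm.cycleOf_apply]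
      exact (mem_filter.mp hσ).2 y hy' (lt_last_of_mem_cycleBelowLast hy).ne
  rw [← hcycle, (mem_insert_cycleBelowLast.mp hx).symm.cycleOf_apply]

lemma sum_Qhat_filter_cycleBelowLast_eq {M : Type*} [AddCommMonoid M]
    (F : Perm (Fin (n + 1)) → M) (hS : ∀ s ∈ S, s < Fin.last n) :
    ∑ σ ∈ Qhat n with cycleBelowLast σ = S, F σ
      = ∑ g : Perm (Fin #(insert (Fin.last n) S)ᶜ),
          F (incCycle S (Fin.last n) * extendOn _ g) := by
  have hfix (g : Perm (Fin #(insert (Fin.last n) S)ᶜ)) :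
      ∀ x ∈ insert (Fin.last n) S, extendOn _ g x = x := fun _ => extendOn_compl_apply_of_mem g
  symm
  refine sum_bij (fun g _ => incCycle S (Fin.last n) * extendOn _ g) (fun g _ => ?_)
    (fun g _ g' _ h => extendOn_injective (mul_left_cancel h)) (fun σ hσ => ?_) (fun _ _ => rfl)
  · exact mem_filter.mpr
      ⟨incCycle_mul_mem_Qhat hS (hfix g), cycleBelowLast_incCycle_mul hS (hfix g)⟩
  · obtain ⟨hQ, rfl⟩ := mem_filter.mp hσ
    obtain ⟨g, hg⟩ := exists_extendOn_eq
      (τ := (incCycle (cycleBelowLast σ) (Fin.last n))⁻¹ * σ) fun x hx => by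
        rw [notMem_compl] at hx
        rw [Perm.mul_apply, apply_eq_incCycle_of_mem_Qhat hQ hx]
        exact symm_apply_apply _ x
    exact ⟨g, mem_univ _, by rw [hg, mul_inv_cancel_left]⟩

end Qhat

section Weights

variable {n : ℕ} {S : Finset (Fin (n + 1))}

lemma card_compl_insert_last_add_card (hS : ∀ s ∈ S, s < Fin.last n) :
    #(insert (Fin.last n) S)ᶜ + #S = n := by
  have h := card_compl_add_card (insert (Fin.last n) S)
  rw [card_insert_of_notMem fun h => lt_irrefl _ (hS _ h), Fintype.card_fin] at h
  omega

variable (g : Perm (Fin #(insert (Fin.last n) S)ᶜ))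

lemma exc_incCycle_mul_extendOn (hS : ∀ s ∈ S, s < Fin.last n) :
    exc (incCycle S (Fin.last n) * extendOn _ g) = #S + exc g := by
  rw [exc_mul_of_disjoint (disjoint_incCycle fun _ => extendOn_compl_apply_of_mem g), exc_incCycle hS,
    exc_extendOn]

lemma fixp_incCycle_mul_extendOn (hS : ∀ s ∈ S, s < Fin.last n) :
    fixp (incCycle S (Fin.last n) * extendOn _ g) = fixp g + if S = ∅ then 1 else 0 := by
  have hcard := card_compl_insert_last_add_card hS
  rcases S.eq_empty_or_nonempty with rfl | hne
  · have := fixp_extendOn g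
    rw [card_empty] at hcard
    rw [incCycle_empty, one_mul, if_pos rfl]
    omega
  · have h₁ := fixp_add_card_support (incCycle S (Fin.last n) * extendOn _ g)
    have h₂ := fixp_add_card_support g
    rw [(disjoint_incCycle fun _ => extendOn_compl_apply_of_mem g).card_support_mul, support_incCycle hS hne,
      card_insert_of_notMem fun h => lt_irrefl _ (hS _ h), card_support_extendOn] at h₁
    rw [if_neg hne.ne_empty]
    omega

lemma cyc_incCycle_mul_extendOn (hS : ∀ s ∈ S, s < Fin.last n) :
    cyc (incCycle S (Fin.last n) * extendOn _ g) = cyc g + 1 := by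
  have hcard := card_compl_insert_last_add_card hS
  rcases S.eq_empty_or_nonempty with rfl | hne
  · have := cyc_extendOn g
    rw [card_empty] at hcard
    rw [incCycle_empty, one_mul]
    omega
  · rw [cyc, cyc, fixp_incCycle_mul_extendOn g hS, if_neg hne.ne_empty,
      (disjoint_incCycle fun _ => extendOn_compl_apply_of_mem g).cycleType_mul, Multiset.card_add,
      (isCycle_incCycle hS hne).cycleType, Multiset.card_singleton, cycleType_extendOn]
    omega

lemma sum_weight_incCycle_mul_extendOn {R : Type*} [CommRing R] (x y q p : R)
    (hS : ∀ s ∈ S, s < Fin.last n) :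
    ∑ g : Perm (Fin #(insert (Fin.last n) S)ᶜ),
        x ^ exc (incCycle S (Fin.last n) * extendOn _ g)
          * y ^ fixp (incCycle S (Fin.last n) * extendOn _ g)
          * q ^ cyc (incCycle S (Fin.last n) * extendOn _ g)
          * p ^ fcyc (incCycle S (Fin.last n) * extendOn _ g)
      = x ^ #S * y ^ (if S = ∅ then 1 else 0) * q * p ^ (#S + 1)
          * Apoly (n - #S) x y q := by
  rw [show n - #S = #(insert (Fin.last n) S)ᶜ by
    have := card_compl_insert_last_add_card hS; omega, Apoly, mul_sum]
  refine sum_congr rfl fun g _ => ?_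
  rw [exc_incCycle_mul_extendOn g hS, fixp_incCycle_mul_extendOn g hS,
    cyc_incCycle_mul_extendOn g hS, fcyc_incCycle_mul hS fun _ => extendOn_compl_apply_of_mem g]
  ring

end Weights

theorem Atilde_eq_Apoly_sum {R : Type*} [CommRing R] (x y q p : R) (n : ℕ) :
    ∑ σ ∈ Qhat n, x ^ exc σ * y ^ fixp σ * q ^ cyc σ * p ^ fcyc σ
      = y * p * q * Apoly n x y q
        + ∑ k ∈ Finset.Icc 1 n,
            (n.choose k : R) * x ^ k * q * p ^ (k + 1) * Apoly (n - k) x y q := by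
  set f : ℕ → R := fun k => x ^ k * y ^ (if k = 0 then 1 else 0) * q * p ^ (k + 1)
    * Apoly (n - k) x y q
  have hmaps : ∀ σ ∈ Qhat n, cycleBelowLast σ ∈ (Iio (Fin.last n)).powerset :=
    fun σ _ => mem_powerset.mpr fun s hs =>
      mem_Iio.mpr (lt_last_of_mem_cycleBelowLast hs)
  have hfiber : ∀ S ∈ (Iio (Fin.last n)).powerset,
      ∑ σ ∈ Qhat n with cycleBelowLast σ = S,
        x ^ exc σ * y ^ fixp σ * q ^ cyc σ * p ^ fcyc σ = f #S := fun S hS => by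
    have hS' : ∀ s ∈ S, s < Fin.last n := fun s hs =>
      mem_Iio.mp (mem_powerset.mp hS hs)
    rw [sum_Qhat_filter_cycleBelowLast_eq _ hS', sum_weight_incCycle_mul_extendOn x y q p hS']
    simp only [f, card_eq_zero]
  rw [← sum_fiberwise_of_maps_to hmaps, sum_congr rfl hfiber,
    sum_powerset_apply_card f, Fin.card_Iio, Fin.val_last, range_eq_Ico,
    sum_eq_sum_Ico_succ_bot (Nat.add_one_pos n), zero_add,
    Ico_add_one_right_eq_Icc]
  congr 1
  · simp only [f, Nat.choose_zero_right, one_smul, if_pos, Nat.sub_zero]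
    ring
  · refine sum_congr rfl fun k hk => ?_
    simp only [f, if_neg (Nat.one_le_iff_ne_zero.mp (mem_Icc.mp hk).1), nsmul_eq_mul]
    ring
end

section
/- For every integer n ≥ 0, Σ_{σ ∈ 𝒬̂_{n+1}} x^{exc(σ)}·(−1)^{cyc(σ)} = Σ_{k=0}^{n} x^{n−k} · ( Σ_{i=k}^{n} (−1)^{i−1}·2^{n−i}·C(n,i) ), as an identity of polynomials in x with integer coefficients, where C(n,i) is the binomial coefficient. -/
open Finset Polynomial

/-!
Up to the global sign `(-1)^(n+1)`, `(-1)^cyc σ` is the sign of `σ`. A permutation in `𝒬̂_{n+1}`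
is determined by the set `C` of its cycle through `n+1`, on which it must act as the increasing
cycle (the only permutation of a finite chain moving every non-maximal element up), together with
an arbitrary permutation `τ` of the complement of `C`; then `exc σ = |C| - 1 + exc τ` and
`sign σ = (-1)^(|C|-1) sign τ`. Summing `sign τ x^(exc τ)` over all permutations of a `d`-element
chain gives the determinant of the `d × d` matrix with `x` strictly below the diagonal and `1`
elsewhere, which is `(1 - x)^(d-1)`. What remains is a binomial sum, and after multiplication by
`1 - x` both sides of the identity become `x^(n+1) - (2x - 1)^n`.
-/

open Equiv Equiv.Perm

namespace Equiv.Perm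

variable {α β : Type*}

section numExc

variable [Fintype α] [LinearOrder α] [Fintype β] [LinearOrder β]

def numExc (σ : Perm α) : ℕ := #{i | i < σ i}

theorem numExc_permCongr (e : α ≃o β) (σ : Perm α) :
    numExc (e.toEquiv.permCongr σ) = numExc σ := by
  refine card_bij (fun b _ => e.symm b) (fun b hb => ?_) (fun _ _ _ _ h => e.symm.injective h)
    (fun a ha => ⟨e a, ?_, e.symm_apply_apply a⟩)
  · simp only [Finset.mem_filter, Finset.mem_univ, true_and] at hb ⊢
    simpa using e.symm.lt_iff_lt.mpr hb
  · simp only [Finset.mem_filter, Finset.mem_univ, true_and] at ha ⊢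
    simpa using e.lt_iff_lt.mpr ha

theorem numExc_subtypeCongr {p : α → Prop} [DecidablePred p] (ep : Perm {a // p a})
    (en : Perm {a // ¬p a}) : numExc (ep.subtypeCongr en) = numExc ep + numExc en := by
  simp only [numExc, card_filter]
  rw [← Fintype.sum_subtype_add_sum_subtype p]
  simp [subtypeCongr.left_apply_subtype, subtypeCongr.right_apply_subtype]

theorem numExc_finRotate (m : ℕ) : numExc (finRotate (m + 1)) = m := by
  simp only [numExc, lt_finRotate_iff_ne_last, filter_ne', card_erase_of_mem (mem_univ _),
    card_univ, Fintype.card_fin, add_tsub_cancel_right]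

end numExc

theorem eq_finRotate_of_lt_apply {m : ℕ} {π : Perm (Fin (m + 1))}
    (hπ : ∀ i, i ≠ Fin.last m → i < π i) : π = finRotate (m + 1) := by
  have hle : ∀ i ∈ univ, (finRotate (m + 1) i : ℕ) ≤ π i := by
    intro i _
    by_cases hi : i = Fin.last m
    · simp [hi]
    · rw [coe_finRotate_of_ne_last hi]
      exact hπ i hi
  have hsum : ∑ i, (finRotate (m + 1) i : ℕ) = ∑ i, (π i : ℕ) := by
    rw [Equiv.sum_comp (finRotate _) (fun i => (i : ℕ)), Equiv.sum_comp π (fun i => (i : ℕ))]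
  ext i
  exact ((sum_eq_sum_iff_of_le hle).mp hsum i (mem_univ i)).symm

theorem sameCycle_finRotate (m : ℕ) (i j : Fin (m + 1)) : (finRotate (m + 1)).SameCycle i j := by
  rcases m with _ | m
  · exact Subsingleton.elim (α := Fin 1) i j ▸ SameCycle.refl _ _
  · have hmove : ∀ k, finRotate (m + 2) k ≠ k := fun k => by
      simpa only [ne_eq, ← mem_support] using support_finRotate (n := m) ▸ mem_univ k
    exact isCycle_finRotate.sameCycle (hmove i) (hmove j)

section orderRotate

variable [LinearOrder β] {m : ℕ} (e : Fin (m + 1) ≃o β)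

def orderRotate : Perm β := e.toEquiv.permCongr (finRotate (m + 1))

theorem numExc_orderRotate [Fintype β] : numExc (orderRotate e) = m :=
  (numExc_permCongr _ _).trans (numExc_finRotate m)

theorem sign_orderRotate [Fintype β] [DecidableEq β] : sign (orderRotate e) = (-1) ^ m := by
  rw [orderRotate, sign_permCongr, sign_finRotate, add_tsub_cancel_right]

theorem sameCycle_orderRotate (x y : β) : (orderRotate e).SameCycle x y := by
  obtain ⟨k, hk⟩ := sameCycle_finRotate m (e.symm x) (e.symm y)
  refine ⟨k, ?_⟩
  rw [orderRotate, ← e.toEquiv.permCongrHom_coe, ← map_zpow, e.toEquiv.permCongrHom_coe,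
    permCongr_apply]
  simp [hk]

theorem lt_orderRotate_apply {x y : β} (hxy : x < y) : x < orderRotate e x := by
  have hx : e.symm x ≠ Fin.last m := fun hx =>
    (e.symm.lt_iff_lt.mpr hxy).not_ge (hx ▸ Fin.le_last _)
  simpa [orderRotate] using e.lt_iff_lt.mpr ((lt_finRotate_iff_ne_last _).mpr hx)

theorem eq_orderRotate {π : Perm β} (hπ : ∀ x y, x < y → x < π x) : π = orderRotate e := by
  have hconj : e.symm.toEquiv.permCongr π = finRotate (m + 1) := by
    refine eq_finRotate_of_lt_apply fun i hi => ?_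
    have := hπ (e i) (e (Fin.last m)) (e.lt_iff_lt.mpr (lt_of_le_of_ne (Fin.le_last i) hi))
    simpa using e.symm.lt_iff_lt.mpr this
  rw [orderRotate, ← hconj]
  ext x
  simp

end orderRotate

section excMatrix

variable {R : Type*} [CommRing R]

def excMatrix (x : R) (d : ℕ) : Matrix (Fin d) (Fin d) R :=
  Matrix.of fun i j => if j < i then x else 1

theorem det_excMatrix (x : R) (d : ℕ) :
    (excMatrix x d).det = ∑ σ : Perm (Fin d), sign σ • x ^ numExc σ := by
  refine (Matrix.det_apply _).trans (sum_congr rfl fun σ _ => ?_)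
  simp only [excMatrix, Matrix.of_apply, prod_ite, prod_const, one_pow, mul_one, numExc]

theorem det_excMatrix_succ (x : R) (m : ℕ) : (excMatrix x (m + 1)).det = (1 - x) ^ m := by
  induction m with
  | zero => simp [excMatrix]
  | succ m ih =>
    -- Subtracting row `0` from row `1` leaves `(x - 1, 0, …, 0)` there, and the minor of that
    -- entry is the same matrix one size smaller.
    set M := excMatrix x (m + 2)
    set B := M.updateRow 1 (M 1 + (-1 : R) • M 0)
    have hrow : ∀ j, B 1 j = if j = 0 then x - 1 else 0 := by
      intro j
      rcases Fin.eq_zero_or_eq_succ j with rfl | ⟨j, rfl⟩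
      · simp [B, M, excMatrix, sub_eq_add_neg]
      · simp [B, M, excMatrix]
    have hminor : B.submatrix (Fin.succAbove 1) Fin.succ = excMatrix x (m + 1) := by
      ext k j
      rcases Fin.eq_zero_or_eq_succ k with rfl | ⟨k, rfl⟩
      · simp [B, M, excMatrix]
      · simp [B, M, excMatrix, Matrix.updateRow_ne (Fin.succ_succ_ne_one k)]
    rw [← Matrix.det_updateRow_add_smul_self M (i := 1) (j := 0) (by simp) (-1),
      Matrix.det_succ_row B 1, Fintype.sum_eq_single 0 fun j hj => by simp [hrow, hj],
      hrow, if_pos rfl, Fin.succAbove_zero, hminor, ih]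
    rw [Fin.val_one, Fin.val_zero]
    ring

end excMatrix

-- This holds for empty `β` too, as `0 - 1 = 0` in `ℕ`.
theorem sum_sign_smul_pow_numExc {R : Type*} [CommRing R] [Fintype β] [LinearOrder β]
    [DecidableEq β] (x : R) :
    ∑ σ : Perm β, sign σ • x ^ numExc σ = (1 - x) ^ (Fintype.card β - 1) := by
  obtain ⟨d, hd⟩ : ∃ d, Fintype.card β = d := ⟨_, rfl⟩
  let e := monoEquivOfFin β hd
  rw [hd, ← e.toEquiv.permCongr.sum_comp]
  simp only [sign_permCongr, numExc_permCongr, ← det_excMatrix]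
  rcases d with _ | m
  · simp
  · exact det_excMatrix_succ x m

section subtypeCongr

variable {p : α → Prop} [DecidablePred p] (ep : Perm {a // p a}) (en : Perm {a // ¬p a})

theorem subtypeCongr_apply_prop_iff (a : α) : p (ep.subtypeCongr en a) ↔ p a := by
  by_cases ha : p a
  · simpa [subtypeCongr.left_apply _ _ ha, ha] using (ep ⟨a, ha⟩).2
  · simpa [subtypeCongr.right_apply _ _ ha, ha] using (en ⟨a, ha⟩).2

theorem sameCycle_subtypeCongr_iff {x y : {a // p a}} :
    (ep.subtypeCongr en).SameCycle x y ↔ ep.SameCycle x y := by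
  have hrestrict : (ep.subtypeCongr en).subtypePerm (subtypeCongr_apply_prop_iff ep en) = ep := by
    ext a
    simp [subtypeCongr.left_apply_subtype]
  rw [← sameCycle_subtypePerm (h := subtypeCongr_apply_prop_iff ep en), hrestrict]

end subtypeCongr

theorem SameCycle.prop_iff [Finite α] {σ : Perm α} {p : α → Prop} (hp : ∀ a, p (σ a) ↔ p a)
    {x y : α} (h : σ.SameCycle x y) : p x ↔ p y := by
  obtain ⟨k, -, rfl⟩ := h.exists_pow_eq'
  clear h
  induction k with
  | zero => rfl
  | succ k ih => rw [ih, pow_succ', mul_apply, hp]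

end Equiv.Perm

theorem exc_eq_numExc {n : ℕ} (σ : Perm (Fin n)) : exc σ = numExc σ := rfl

theorem neg_one_pow_cyc {n : ℕ} (σ : Perm (Fin n)) : (-1 : ℤˣ) ^ cyc σ = (-1) ^ n * sign σ := by
  have hfix : #σ.support + fixp σ = n := by
    simpa [fixp, Perm.support, add_comm] using
      card_filter_add_card_filter_not (s := (univ : Finset (Fin n))) fun i => σ i = i
  have hparity : #σ.support + fixp σ + (#σ.support + σ.cycleType.card)
      = cyc σ + 2 * #σ.support := by
    rw [cyc]; ring
  -- `n` also occurs in the type of `σ`, so `hfix` may only be used inside the exponent.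
  rw [sign_of_cycleType, sum_cycleType, show (-1 : ℤˣ) ^ n = _ from congrArg _ hfix.symm,
    ← pow_add, hparity, pow_add, pow_mul, neg_one_sq, one_pow, mul_one]

section Qhat

variable {n : ℕ}

def lastCycle (σ : Perm (Fin (n + 1))) : Finset (Fin (n + 1)) := {x | σ.SameCycle x (Fin.last n)}

theorem mem_lastCycle {σ : Perm (Fin (n + 1))} {x : Fin (n + 1)} :
    x ∈ lastCycle σ ↔ σ.SameCycle x (Fin.last n) := by
  simp [lastCycle]

theorem apply_mem_lastCycle_iff (σ : Perm (Fin (n + 1))) (x : Fin (n + 1)) :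
    σ x ∈ lastCycle σ ↔ x ∈ lastCycle σ := by
  simp only [mem_lastCycle, sameCycle_apply_left]

theorem mem_Qhat {σ : Perm (Fin (n + 1))} :
    σ ∈ Qhat n ↔ ∀ x, σ.SameCycle x (Fin.last n) → x ≠ Fin.last n → x < σ x := by
  simp [Qhat]

variable {C : Finset (Fin (n + 1))} {m : ℕ} (e : Fin (m + 1) ≃o C)

theorem lastCycle_subtypeCongr_orderRotate (hL : Fin.last n ∈ C) (τ : Perm {x // x ∉ C}) :
    lastCycle ((orderRotate e).subtypeCongr τ) = C := by
  ext x
  refine ⟨fun hx => (mem_lastCycle.mp hx).prop_iff (subtypeCongr_apply_prop_iff _ τ) |>.mpr hL,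
    fun hx => mem_lastCycle.mpr ?_⟩
  exact (sameCycle_subtypeCongr_iff (x := ⟨x, hx⟩) (y := ⟨_, hL⟩) _ τ).mpr
    (sameCycle_orderRotate e _ _)

theorem subtypeCongr_orderRotate_mem_Qhat (hL : Fin.last n ∈ C) (τ : Perm {x // x ∉ C}) :
    (orderRotate e).subtypeCongr τ ∈ Qhat n := by
  refine mem_Qhat.mpr fun x hx hxL => ?_
  have hxC : x ∈ C := lastCycle_subtypeCongr_orderRotate e hL τ ▸ mem_lastCycle.mpr hx
  rw [subtypeCongr.left_apply _ _ hxC]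
  exact lt_orderRotate_apply e (x := ⟨x, hxC⟩) (y := ⟨_, hL⟩)
    (Subtype.mk_lt_mk.mpr (lt_of_le_of_ne (Fin.le_last x) hxL))

theorem subtypeCongr_orderRotate_subtypePerm {σ : Perm (Fin (n + 1))} (hσ : σ ∈ Qhat n)
    (hσC : lastCycle σ = C) :
    (orderRotate e).subtypeCongr (σ.subtypePerm fun x => by
      rw [not_iff_not, ← hσC, apply_mem_lastCycle_iff]) = σ := by
  have hinv : ∀ x, σ x ∈ C ↔ x ∈ C := fun x => by rw [← hσC, apply_mem_lastCycle_iff]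
  have hrot : σ.subtypePerm hinv = orderRotate e := eq_orderRotate e fun x y hxy => by
    have hxL : (x : Fin (n + 1)) ≠ Fin.last n :=
      ((Subtype.coe_lt_coe.mpr hxy).trans_le (Fin.le_last _)).ne
    exact mem_Qhat.mp hσ x (mem_lastCycle.mp (hσC ▸ x.2)) hxL
  ext x
  by_cases hx : x ∈ C
  · rw [subtypeCongr.left_apply _ _ hx, ← hrot, subtypePerm_apply]
  · rw [subtypeCongr.right_apply _ _ hx, subtypePerm_apply]

theorem sum_Qhat_filter_lastCycle_eq {R : Type*} [CommRing R] (x : R) (hC : #C = m + 1)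
    (hL : Fin.last n ∈ C) :
    ∑ σ ∈ Qhat n with lastCycle σ = C, sign σ • x ^ exc σ = (-x) ^ m * (1 - x) ^ (n - m - 1) := by
  set e := C.orderIsoOfFin hC
  have hcompl : Fintype.card {a // a ∉ C} = n - m := by
    rw [Fintype.card_subtype_compl, Fintype.card_fin, Fintype.card_coe, hC]
    omega
  calc ∑ σ ∈ Qhat n with lastCycle σ = C, sign σ • x ^ exc σ
      = ∑ τ : Perm {a // a ∉ C}, sign ((orderRotate e).subtypeCongr τ) •
          x ^ exc ((orderRotate e).subtypeCongr τ) := by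
        refine (sum_bij' (fun τ _ => (orderRotate e).subtypeCongr τ)
          (fun σ hσ => σ.subtypePerm fun a => by
            rw [not_iff_not, ← (Finset.mem_filter.mp hσ).2, apply_mem_lastCycle_iff])
          (fun τ _ => Finset.mem_filter.mpr ⟨subtypeCongr_orderRotate_mem_Qhat e hL τ,
            lastCycle_subtypeCongr_orderRotate e hL τ⟩)
          (fun _ _ => mem_univ _) (fun τ _ => ?_)
          (fun σ hσ => subtypeCongr_orderRotate_subtypePerm e (Finset.mem_filter.mp hσ).1
            (Finset.mem_filter.mp hσ).2)
          (fun _ _ => rfl)).symm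
        ext a
        simp [subtypeCongr.right_apply _ _ a.2]
    _ = ∑ τ : Perm {a // a ∉ C}, (-x) ^ m * (sign τ • x ^ numExc τ) := by
        refine sum_congr rfl fun τ _ => ?_
        rw [sign_subtypeCongr, sign_orderRotate, exc_eq_numExc, numExc_subtypeCongr,
          numExc_orderRotate, pow_add, Units.smul_def, Units.smul_def, zsmul_eq_mul, zsmul_eq_mul]
        push_cast
        ring
    _ = (-x) ^ m * (1 - x) ^ (n - m - 1) := by
        rw [← mul_sum, sum_sign_smul_pow_numExc, hcompl]

theorem sum_Qhat_sign_smul_pow_exc {R : Type*} [CommRing R] (x : R) (n : ℕ) :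
    ∑ σ ∈ Qhat n, sign σ • x ^ exc σ
      = ∑ j ∈ range (n + 1), n.choose j • ((-x) ^ j * (1 - x) ^ (n - j - 1)) := by
  rw [← sum_fiberwise_of_maps_to (g := fun σ => (lastCycle σ).erase (Fin.last n))
    (t := (univ.erase (Fin.last n)).powerset)
    fun σ _ => mem_powerset.mpr (erase_subset_erase _ (subset_univ _))]
  have hfiber : ∀ S ∈ (univ.erase (Fin.last n)).powerset,
      ∑ σ ∈ Qhat n with (lastCycle σ).erase (Fin.last n) = S, sign σ • x ^ exc σ
        = (-x) ^ #S * (1 - x) ^ (n - #S - 1) := fun S hS => by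
    have hLS : Fin.last n ∉ S := fun h => by simpa using mem_powerset.mp hS h
    rw [filter_congr fun σ _ =>
      erase_eq_iff_eq_insert (mem_lastCycle.mpr (SameCycle.refl _ _)) hLS]
    exact sum_Qhat_filter_lastCycle_eq x (card_insert_of_notMem hLS) (mem_insert_self _ _)
  rw [sum_congr rfl hfiber, sum_powerset_apply_card (fun j => (-x) ^ j * (1 - x) ^ (n - j - 1)),
    card_erase_of_mem (mem_univ _), card_univ, Fintype.card_fin, add_tsub_cancel_right]

end Qhat

section algebra

variable {R : Type*} [CommRing R]

theorem one_sub_mul_sum_choose_smul (x : R) (n : ℕ) :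
    (1 - x) * ∑ j ∈ range (n + 1), n.choose j • ((-x) ^ j * (1 - x) ^ (n - j - 1))
      = (1 - 2 * x) ^ n - x * (-x) ^ n := by
  have hterm : ∀ j ∈ range n, (1 - x) * (n.choose j • ((-x) ^ j * (1 - x) ^ (n - j - 1)))
      = (-x) ^ j * (1 - x) ^ (n - j) * n.choose j := fun j hj => by
    obtain ⟨d, hd⟩ : ∃ d, n - j = d + 1 := ⟨n - j - 1, by have := mem_range.mp hj; omega⟩
    rw [hd, Nat.add_sub_cancel, nsmul_eq_mul]
    ring
  have hbinom := add_pow (-x) (1 - x) n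
  rw [sum_range_succ, Nat.sub_self, pow_zero, Nat.choose_self, Nat.cast_one] at hbinom
  rw [mul_sum, sum_range_succ, sum_congr rfl hterm, Nat.choose_self, one_smul, Nat.sub_self,
    Nat.zero_sub, pow_zero]
  linear_combination (-1 : R) * hbinom

theorem one_sub_mul_sum_pow_mul_sum_Icc (x : R) (b : ℕ → R) (n : ℕ) :
    (1 - x) * ∑ k ∈ range (n + 1), x ^ (n - k) * ∑ i ∈ Icc k n, b i
      = ∑ i ∈ range (n + 1), x ^ (n - i) * b i - x ^ (n + 1) * ∑ i ∈ range (n + 1), b i := by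
  have hswap : ∑ k ∈ range (n + 1), x ^ (n - k) * ∑ i ∈ Icc k n, b i
      = ∑ i ∈ range (n + 1), (∑ k ∈ range (i + 1), x ^ (n - k)) * b i := by
    simp_rw [mul_sum, sum_mul, range_eq_Ico, ← Ico_add_one_right_eq_Icc]
    exact sum_Ico_Ico_comm 0 (n + 1) fun k i => x ^ (n - k) * b i
  have htelescope : ∀ i ∈ range (n + 1), (1 - x) * ∑ k ∈ range (i + 1), x ^ (n - k)
      = x ^ (n - i) - x ^ (n + 1) := fun i hi => by
    have hterm : ∀ k ∈ range (i + 1), (1 - x) * x ^ (n - k)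
        = x ^ (n + 1 - (k + 1)) - x ^ (n + 1 - k) := fun k hk => by
      have : k ≤ n := by have := mem_range.mp hk; have := mem_range.mp hi; omega
      rw [Nat.add_sub_add_right, show n + 1 - k = n - k + 1 by omega]
      ring
    rw [mul_sum, sum_congr rfl hterm, sum_range_sub (fun k => x ^ (n + 1 - k)),
      Nat.add_sub_add_right, Nat.sub_zero]
  rw [hswap, mul_sum, mul_sum, ← sum_sub_distrib]
  refine sum_congr rfl fun i hi => ?_
  rw [← mul_assoc, htelescope i hi]
  ring

end algebra

theorem one_sub_mul_sum_Qhat_pow_exc_mul_neg_one_pow_cyc {R : Type*} [CommRing R] (x : R) (n : ℕ) :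
    (1 - x) * ∑ σ ∈ Qhat n, x ^ exc σ * (-1) ^ cyc σ = x ^ (n + 1) - (2 * x - 1) ^ n := by
  have hcyc : ∀ σ : Perm (Fin (n + 1)),
      x ^ exc σ * (-1) ^ cyc σ = (-1) ^ (n + 1) * (sign σ • x ^ exc σ) := fun σ => by
    have h := congrArg (fun u : ℤˣ => ((u : ℤ) : R)) (neg_one_pow_cyc σ)
    push_cast at h
    rw [Units.smul_def, zsmul_eq_mul, mul_comm, h]
    ring
  have hsq : (-1 : R) ^ n * (-1) ^ n = 1 := by rw [← mul_pow]; norm_num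
  rw [sum_congr rfl fun σ _ => hcyc σ, ← mul_sum, mul_left_comm, sum_Qhat_sign_smul_pow_exc,
    one_sub_mul_sum_choose_smul, show 1 - 2 * x = -1 * (2 * x - 1) by ring, neg_pow x, mul_pow]
  linear_combination (x ^ (n + 1) - (2 * x - 1) ^ n) * hsq

theorem one_sub_X_mul_sum_X_pow_mul_C_sum_Icc (n : ℕ) :
    (1 - X) * ∑ k ∈ range (n + 1), (X : ℤ[X]) ^ (n - k) *
        C (∑ i ∈ Icc k n, (-1 : ℤ) ^ (i + 1) * 2 ^ (n - i) * n.choose i)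
      = X ^ (n + 1) - (2 * X - 1) ^ n := by
  have hpoly : ∑ i ∈ range (n + 1),
      (X : ℤ[X]) ^ (n - i) * C ((-1 : ℤ) ^ (i + 1) * 2 ^ (n - i) * n.choose i)
        = -(2 * X - 1) ^ n := by
    rw [show (2 * X - 1 : ℤ[X]) = -1 + 2 * X by ring, add_pow, ← sum_neg_distrib]
    refine sum_congr rfl fun i _ => ?_
    simp only [map_mul, map_pow, map_neg, map_one, map_ofNat, map_natCast]
    ring
  have hcoeff : ∑ i ∈ range (n + 1), (-1 : ℤ) ^ (i + 1) * 2 ^ (n - i) * n.choose i = -1 := by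
    simpa [eval_finsetSum] using congrArg (eval 1) hpoly
  simp_rw [map_sum]
  rw [one_sub_mul_sum_pow_mul_sum_Icc, ← map_sum, hcoeff, hpoly, map_neg, map_one]
  ring

/-- Note that `(-1)^(i-1) = (-1)^(i+1)`, which avoids truncated subtraction at `i = 0`. -/
theorem sum_exc_cyc_sign (n : ℕ) :
    ∑ σ ∈ Qhat n, (X : Polynomial ℤ) ^ exc σ * (-1) ^ cyc σ
      = ∑ k ∈ Finset.range (n + 1), (X : Polynomial ℤ) ^ (n - k) *
          C (∑ i ∈ Finset.Icc k n, (-1 : ℤ) ^ (i + 1) * 2 ^ (n - i) * n.choose i) := by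
  have hX : (1 - X : ℤ[X]) ≠ 0 := by simpa using sub_ne_zero.mpr (X_ne_C (1 : ℤ)).symm
  exact mul_left_cancel₀ hX ((one_sub_mul_sum_Qhat_pow_exc_mul_neg_one_pow_cyc X n).trans
    (one_sub_X_mul_sum_X_pow_mul_C_sum_Icc n).symm)
end

section
/- For every integer n ≥ 0, (1+x)·Σ_{k=0}^{n} B(n,k)·x^k = 1 + x·(2+x)^n as polynomials in x with integer coefficients; equivalently, the exponential generating function Σ_{n≥0} B_n(x) z^n/n! equals (e^z + x·e^{(2+x)z})/(1+x), where B_n(x) = Σ_{k=0}^{n} B(n,k)x^k. -/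
open Finset Polynomial

/-- The Betti number `B(n,k) = Σ_{i=k}^{n} (−1)^{k−i} 2^{n−i} C(n,i)`;
for `i ≥ k` one has `(−1)^{k−i} = (−1)^{i−k}`. -/
def BettiB (n k : ℕ) : ℤ :=
  ∑ i ∈ Finset.Icc k n, (-1 : ℤ) ^ (i - k) * 2 ^ (n - i) * n.choose i

lemma alt_geom (i : ℕ) :
    (1 + X : ℤ[X]) * ∑ k ∈ Finset.range (i + 1), (-1 : ℤ[X]) ^ (i - k) * X ^ k
      = (-1 : ℤ[X]) ^ i + X ^ (i + 1) := by
  induction i with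
  | zero => simp
  | succ m ih =>
    have hs : ∑ k ∈ Finset.range (m + 2), (-1 : ℤ[X]) ^ (m + 1 - k) * X ^ k
        = (-1) * ∑ k ∈ Finset.range (m + 1), (-1 : ℤ[X]) ^ (m - k) * X ^ k + X ^ (m + 1) := by
      rw [Finset.sum_range_succ, Finset.mul_sum]
      congr 1
      · refine Finset.sum_congr rfl fun k hk => ?_
        rw [Finset.mem_range] at hk
        have : m + 1 - k = (m - k) + 1 := by omega
        rw [this, pow_succ]
        ring
      · simp
    rw [hs, mul_add, mul_comm (1 + X) (-1 * _), mul_assoc, mul_comm _ (1 + X), ih]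
    ring

/-- `(1+x)·B_n(x) = 1 + x(2+x)^n`, the polynomial form of the generating function
`Σ_{n≥0} B_n(x) z^n/n! = (e^z + x e^{(2+x)z})/(1+x)`. -/
theorem BettiB_generating_identity (n : ℕ) :
    (1 + X) * ∑ k ∈ Finset.range (n + 1), C (BettiB n k) * X ^ k
      = 1 + X * (2 + X) ^ n := by
  have hS : ∑ k ∈ Finset.range (n + 1), C (BettiB n k) * X ^ k
      = ∑ k ∈ Finset.range (n + 1), ∑ i ∈ Finset.Icc k n,
          C ((2 : ℤ) ^ (n - i) * n.choose i) * ((-1 : ℤ[X]) ^ (i - k) * X ^ k) := by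
    refine Finset.sum_congr rfl fun k _ => ?_
    rw [BettiB, map_sum, Finset.sum_mul]
    refine Finset.sum_congr rfl fun i _ => ?_
    simp [map_mul, map_pow, map_ofNat]
    ring
  have hswap : ∑ k ∈ Finset.range (n + 1), ∑ i ∈ Finset.Icc k n,
          C ((2 : ℤ) ^ (n - i) * n.choose i) * ((-1 : ℤ[X]) ^ (i - k) * X ^ k)
      = ∑ i ∈ Finset.range (n + 1), C ((2 : ℤ) ^ (n - i) * n.choose i) *
          ∑ k ∈ Finset.range (i + 1), (-1 : ℤ[X]) ^ (i - k) * X ^ k := by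
    have := Finset.sum_Ico_Ico_comm 0 (n + 1)
      (fun k i => C ((2 : ℤ) ^ (n - i) * n.choose i) * ((-1 : ℤ[X]) ^ (i - k) * X ^ k))
    simp only [Nat.Ico_zero_eq_range] at this
    simp only [← Finset.Ico_add_one_right_eq_Icc]
    rw [this]
    exact Finset.sum_congr rfl fun i _ => (Finset.mul_sum _ _ _).symm
  rw [hS, hswap, Finset.mul_sum]
  have hterm : ∀ i ∈ Finset.range (n + 1),
      (1 + X) * (C ((2 : ℤ) ^ (n - i) * n.choose i) *
        ∑ k ∈ Finset.range (i + 1), (-1 : ℤ[X]) ^ (i - k) * X ^ k)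
      = C ((2 : ℤ) ^ (n - i) * n.choose i) * ((-1 : ℤ[X]) ^ i + X ^ (i + 1)) := by
    intro i _
    rw [mul_comm (1 + X) _, mul_assoc, mul_comm _ (1 + X), alt_geom]
  rw [Finset.sum_congr rfl hterm]
  have hsplit : ∑ i ∈ Finset.range (n + 1),
      C ((2 : ℤ) ^ (n - i) * n.choose i) * ((-1 : ℤ[X]) ^ i + X ^ (i + 1))
      = (∑ i ∈ Finset.range (n + 1), C ((2 : ℤ) ^ (n - i) * n.choose i) * (-1 : ℤ[X]) ^ i)
        + X * ∑ i ∈ Finset.range (n + 1), C ((2 : ℤ) ^ (n - i) * n.choose i) * X ^ i := by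
    rw [Finset.mul_sum, ← Finset.sum_add_distrib]
    refine Finset.sum_congr rfl fun i _ => ?_
    ring
  rw [hsplit]
  congr 1
  · -- Σ (-1)^i 2^(n-i) C(n,i) = 1
    have h1 : ((-1 : ℤ) + 2) ^ n = ∑ i ∈ Finset.range (n + 1),
        (-1 : ℤ) ^ i * 2 ^ (n - i) * n.choose i := add_pow (-1 : ℤ) 2 n
    have h2 : (1 : ℤ) = ∑ i ∈ Finset.range (n + 1),
        (-1 : ℤ) ^ i * 2 ^ (n - i) * n.choose i := by
      rw [← h1]; norm_num
    calc ∑ i ∈ Finset.range (n + 1), C ((2 : ℤ) ^ (n - i) * n.choose i) * (-1 : ℤ[X]) ^ i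
        = C (∑ i ∈ Finset.range (n + 1), (-1 : ℤ) ^ i * 2 ^ (n - i) * n.choose i) := by
          rw [map_sum]
          refine Finset.sum_congr rfl fun i _ => ?_
          simp [map_mul, map_pow]
          ring
      _ = 1 := by rw [← h2]; simp
  · -- X * (2+X)^n part
    congr 1
    have h3 : ((X : ℤ[X]) + C 2) ^ n = ∑ i ∈ Finset.range (n + 1),
        X ^ i * (C 2) ^ (n - i) * (n.choose i : ℤ[X]) := add_pow (X : ℤ[X]) (C 2) n
    have h4 : (2 + X : ℤ[X]) = X + C 2 := by
      rw [add_comm]; norm_num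
    rw [h4, h3]
    refine Finset.sum_congr rfl fun i _ => ?_
    simp [map_mul, map_pow]
    ring
end
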